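/- arXiv:1412.5830 — 9 statements merged into one kernel-verified Lean document; each statement's English description precedes it below -/
import Mathlib

section
/- Let Γ be a finite abelian group generated by two elements a, b, and let A = {a, −a, b, −b}. Then there exists a nonsingular matrix M ∈ M₂(ℤ) such that the Cayley graph Cay(Γ; A) is isomorphic (as a graph) to G(M). -/
/-- The lattice generated by the columns of a 2×2 integer matrix `M`. -/
def latticeOf (M : Matrix (Fin 2) (Fin 2) ℤ) : AddSubgroup (Fin 2 → ℤ) :=
  AddSubgroup.closure {fun i => M i 0, fun i => M i 1}

/-- The graph `G(M)`: vertices are classes of ℤ² modulo the columns of `M`, and two classes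
`u`, `v` are adjacent iff `v - u` is the class of `(1,0)`, `(-1,0)`, `(0,1)` or `(0,-1)`. -/
def GM (M : Matrix (Fin 2) (Fin 2) ℤ) : SimpleGraph ((Fin 2 → ℤ) ⧸ latticeOf M) :=
  SimpleGraph.fromRel (fun u v => v - u ∈
    (QuotientAddGroup.mk '' ({![1, 0], ![-1, 0], ![0, 1], ![0, -1]} : Set (Fin 2 → ℤ))))

/-- The Cayley graph of an (additive) group with respect to a symmetric connection set `A`:
`v` is adjacent to `v + g` for each `g ∈ A`. -/
def cayley {Γ : Type*} [AddGroup Γ] (A : Set Γ) : SimpleGraph Γ :=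
  SimpleGraph.fromRel (fun v w => w - v ∈ A)

/-- Let Γ be a finite abelian group generated by two elements a, b, and let
A = {a, −a, b, −b}. Then there exists a nonsingular matrix M ∈ M₂(ℤ) such that the Cayley
graph Cay(Γ; A) is isomorphic (as a graph) to G(M). -/
theorem stmt_1 {Γ : Type*} [AddCommGroup Γ] [Fintype Γ] (a b : Γ)
    (hgen : AddSubgroup.closure {a, b} = ⊤) :
    ∃ M : Matrix (Fin 2) (Fin 2) ℤ, M.det ≠ 0 ∧
      Nonempty (cayley ({a, -a, b, -b} : Set Γ) ≃g GM M) := by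
  classical
  set φ : (Fin 2 → ℤ) →+ Γ := AddMonoidHom.mk' (fun v => v 0 • a + v 1 • b)
    (by intro v w; simp [add_smul]; abel) with hφdef
  have hφ : ∀ v : Fin 2 → ℤ, φ v = v 0 • a + v 1 • b := fun v => rfl
  have hφa : φ ![1, 0] = a := by simp [hφ]
  have hφb : φ ![0, 1] = b := by simp [hφ]
  have hφa' : φ ![-1, 0] = -a := by simp [hφ]
  have hφb' : φ ![0, -1] = -b := by simp [hφ]
  have hsurj : Function.Surjective φ := by
    intro g
    have hle : AddSubgroup.closure {a, b} ≤ φ.range := by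
      apply (AddSubgroup.closure_le _).mpr
      rintro x (rfl | rfl)
      · exact ⟨![1, 0], hφa⟩
      · exact ⟨![0, 1], hφb⟩
    have : g ∈ AddSubgroup.closure {a, b} := by rw [hgen]; trivial
    exact hle this
  set K : Submodule ℤ (Fin 2 → ℤ) := AddSubgroup.toIntSubmodule φ.ker with hKdef
  have hKmem : ∀ x : Fin 2 → ℤ, x ∈ K ↔ φ x = 0 := fun x => Iff.rfl
  obtain ⟨n, c⟩ := Submodule.basisOfPid (Pi.basisFun ℤ (Fin 2)) K
  haveI : Module.Finite ℤ K := Module.Finite.of_basis c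
  set N : ℤ := (Fintype.card Γ : ℤ) with hN
  have hNne : N ≠ 0 := by
    simp [hN, Fintype.card_ne_zero]
  have hNmem : ∀ i : Fin 2, (N • Pi.single i 1 : Fin 2 → ℤ) ∈ K := by
    intro i
    rw [hKmem, map_zsmul, hN]
    norm_cast
    exact card_nsmul_eq_zero
  -- linear independence of the scaled standard basis
  have hindN : LinearIndependent ℤ (fun i : Fin 2 => (N • Pi.single i 1 : Fin 2 → ℤ)) := by
    have hmap := (Pi.basisFun ℤ (Fin 2)).linearIndependent.map'
      (N • (LinearMap.id : (Fin 2 → ℤ) →ₗ[ℤ] Fin 2 → ℤ))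
      (LinearMap.ker_eq_bot.mpr (smul_right_injective _ hNne))
    convert hmap using 1
    funext i
    simp [Pi.basisFun_apply]
    all_goals rfl
  have hindK : LinearIndependent ℤ (fun i : Fin 2 => (⟨N • Pi.single i 1, hNmem i⟩ : K)) := by
    apply LinearIndependent.of_comp K.subtype
    exact hindN
  have hindc := c.linearIndependent.map' K.subtype K.ker_subtype
  have hn2 : n = 2 := by
    have h1 : 2 ≤ Module.finrank ℤ K := by
      simpa using hindK.fintype_card_le_finrank
    have h2 : Module.finrank ℤ K = n := by
      simpa using Module.finrank_eq_card_basis c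
    have h3 : n ≤ 2 := by
      have := hindc.fintype_card_le_finrank
      simpa [Module.finrank_fin_fun] using this
    omega
  subst hn2
  set M : Matrix (Fin 2) (Fin 2) ℤ := Matrix.of (fun i j => (c j : Fin 2 → ℤ) i) with hM
  have hcol : ({fun i => M i 0, fun i => M i 1} : Set (Fin 2 → ℤ))
      = {((c 0 : Fin 2 → ℤ)), ((c 1 : Fin 2 → ℤ))} := rfl
  have hspan : Submodule.span ℤ ({((c 0 : Fin 2 → ℤ)), ((c 1 : Fin 2 → ℤ))} : Set (Fin 2 → ℤ)) = K := by
    have h1 : Set.range (fun i : Fin 2 => (c i : Fin 2 → ℤ)) = {((c 0 : Fin 2 → ℤ)), ((c 1 : Fin 2 → ℤ))} := by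
      ext x
      simp [Fin.exists_fin_two, eq_comm]
    have h2 := congrArg (Submodule.map K.subtype) c.span_eq
    rw [Submodule.map_span, ← Set.range_comp, Submodule.map_top, Submodule.range_subtype] at h2
    rw [← h1]
    exact h2
  have hlat : latticeOf M = φ.ker := by
    have := congrArg Submodule.toAddSubgroup hspan
    rw [Submodule.span_int_eq_addSubgroupClosure] at this
    rw [latticeOf, hcol, this]
    rfl
  -- determinant
  have hdet : M.det ≠ 0 := by
    intro h0
    obtain ⟨v, hvne, hv⟩ := (Matrix.exists_mulVec_eq_zero_iff).mpr h0
    rw [Fintype.linearIndependent_iff] at hindc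
    have hsum : ∑ i : Fin 2, v i • ((K.subtype ∘ c) i) = 0 := by
      funext j
      have := congrFun hv j
      simp [hM, Matrix.mulVec, dotProduct, Fin.sum_univ_two, mul_comm] at this ⊢
      linarith
    exact hvne (funext (hindc v hsum))
  -- the quotient map / equivalence
  have hker : ∀ x ∈ latticeOf M, φ x = 0 := by
    intro x hx
    rw [hlat] at hx
    exact hx
  set ψ : ((Fin 2 → ℤ) ⧸ latticeOf M) →+ Γ := QuotientAddGroup.lift _ φ hker with hψdef
  have hψ : ∀ v : Fin 2 → ℤ, ψ (QuotientAddGroup.mk v) = φ v := fun v => rfl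
  have hbij : Function.Bijective ψ := by
    constructor
    · rw [injective_iff_map_eq_zero]
      intro q hq
      obtain ⟨x, rfl⟩ := QuotientAddGroup.mk_surjective q
      rw [hψ] at hq
      rw [QuotientAddGroup.eq_zero_iff, hlat]
      exact hq
    · intro g
      obtain ⟨x, hx⟩ := hsurj g
      exact ⟨QuotientAddGroup.mk x, hx⟩
  set e : ((Fin 2 → ℤ) ⧸ latticeOf M) ≃+ Γ := AddEquiv.ofBijective ψ hbij with hedef
  have he : ∀ v : Fin 2 → ℤ, e (QuotientAddGroup.mk v) = φ v := fun v => rfl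
  refine ⟨M, hdet, ⟨⟨e.symm.toEquiv, ?_⟩⟩⟩
  have hset : ∀ g : Γ, (e.symm g ∈ QuotientAddGroup.mk ''
      ({![1, 0], ![-1, 0], ![0, 1], ![0, -1]} : Set (Fin 2 → ℤ)))
      ↔ g ∈ ({a, -a, b, -b} : Set Γ) := by
    intro g
    constructor
    · rintro ⟨v, hv, hgv⟩
      have hg : g = φ v := by
        rw [← he v, hgv, AddEquiv.apply_symm_apply]
      rcases hv with rfl | rfl | rfl | rfl
      · left; rw [hg, hφa]
      · right; left; rw [hg, hφa']
      · right; right; left; rw [hg, hφb]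
      · right; right; right; rw [hg, hφb']; rfl
    · intro hg
      rcases hg with rfl | rfl | rfl | hg
      · exact ⟨![1, 0], by simp, by rw [← hφa, ← he, AddEquiv.symm_apply_apply]⟩
      · exact ⟨![-1, 0], by simp, by rw [← hφa', ← he, AddEquiv.symm_apply_apply]⟩
      · exact ⟨![0, 1], by simp, by rw [← hφb, ← he, AddEquiv.symm_apply_apply]⟩
      · rw [Set.mem_singleton_iff] at hg; subst hg
        exact ⟨![0, -1], by simp, by rw [← hφb', ← he, AddEquiv.symm_apply_apply]⟩
  intro x y
  show (GM M).Adj (e.symm x) (e.symm y) ↔ (cayley _).Adj x y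
  rw [GM, cayley, SimpleGraph.fromRel_adj, SimpleGraph.fromRel_adj]
  have hsub : ∀ u w : Γ, e.symm w - e.symm u = e.symm (w - u) := by
    intro u w; rw [map_sub]
  rw [hsub, hsub, hset, hset]
  constructor
  · rintro ⟨hne, h⟩
    exact ⟨fun h' => hne (by rw [h']), h⟩
  · rintro ⟨hne, h⟩
    exact ⟨fun h' => hne (e.symm.injective h'), h⟩
end

section
/- Let t, d be positive integers with gcd(2t, d) = 1 and let r = t² + dt + (d² − 1)/2. Then for every v ∈ ℤ², the ball B_r(v) is r-fixed by C_{t,d}; that is, C_{t,d} contains at least one point in each of the four sets UR⁻_r(v) ∪ BL⁺_r(v), UL⁻_r(v) ∪ BR⁺_r(v), BR⁻_r(v) ∪ UL⁺_r(v), and BL⁻_r(v) ∪ UR⁺_r(v). -/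
/-- The lattice code `C_{t,d}`: the subgroup of ℤ² generated by `(t, t+d)` and `(-(t+d), t)`. -/
def Ctd (t d : ℤ) : AddSubgroup (ℤ × ℤ) :=
  AddSubgroup.closure {(t, t + d), (-(t + d), t)}

/-- `UR⁻_r(v)`. -/
def URm (r : ℤ) (v : ℤ × ℤ) : Set (ℤ × ℤ) :=
  {p | 0 ≤ p.1 - v.1 ∧ 0 ≤ p.2 - v.2 ∧ |p.1 - v.1| + |p.2 - v.2| = r}

/-- `UL⁻_r(v)`. -/
def ULm (r : ℤ) (v : ℤ × ℤ) : Set (ℤ × ℤ) :=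
  {p | p.1 - v.1 ≤ 0 ∧ 0 ≤ p.2 - v.2 ∧ |p.1 - v.1| + |p.2 - v.2| = r}

/-- `BR⁻_r(v)`. -/
def BRm (r : ℤ) (v : ℤ × ℤ) : Set (ℤ × ℤ) :=
  {p | p.2 - v.2 ≤ 0 ∧ 0 ≤ p.1 - v.1 ∧ |p.1 - v.1| + |p.2 - v.2| = r}

/-- `BL⁻_r(v)`. -/
def BLm (r : ℤ) (v : ℤ × ℤ) : Set (ℤ × ℤ) :=
  {p | p.1 - v.1 ≤ 0 ∧ p.2 - v.2 ≤ 0 ∧ |p.1 - v.1| + |p.2 - v.2| = r}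

/-- `UR⁺_r(v)`. -/
def URp (r : ℤ) (v : ℤ × ℤ) : Set (ℤ × ℤ) :=
  {p | 0 < p.1 - v.1 ∧ 0 < p.2 - v.2 ∧ |p.1 - v.1| + |p.2 - v.2| = r + 1}

/-- `UL⁺_r(v)`. -/
def ULp (r : ℤ) (v : ℤ × ℤ) : Set (ℤ × ℤ) :=
  {p | p.1 - v.1 < 0 ∧ 0 < p.2 - v.2 ∧ |p.1 - v.1| + |p.2 - v.2| = r + 1}

/-- `BR⁺_r(v)`. -/
def BRp (r : ℤ) (v : ℤ × ℤ) : Set (ℤ × ℤ) :=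
  {p | p.2 - v.2 < 0 ∧ 0 < p.1 - v.1 ∧ |p.1 - v.1| + |p.2 - v.2| = r + 1}

/-- `BL⁺_r(v)`. -/
def BLp (r : ℤ) (v : ℤ × ℤ) : Set (ℤ × ℤ) :=
  {p | p.1 - v.1 < 0 ∧ p.2 - v.2 < 0 ∧ |p.1 - v.1| + |p.2 - v.2| = r + 1}

lemma mem_Ctd (t d a b : ℤ) :
    ((a*t - b*(t+d), a*(t+d) + b*t) : ℤ × ℤ) ∈ Ctd t d := by
  have h1 : ((t, t+d) : ℤ × ℤ) ∈ Ctd t d := AddSubgroup.subset_closure (by simp)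
  have h2 : ((-(t+d), t) : ℤ × ℤ) ∈ Ctd t d := AddSubgroup.subset_closure (by simp)
  have h := AddSubgroup.add_mem _ (AddSubgroup.zsmul_mem _ h1 a) (AddSubgroup.zsmul_mem _ h2 b)
  convert h using 1
  simp [Prod.ext_iff, smul_eq_mul, Prod.smul_def]
  ring

lemma find_sum (t d r x y : ℤ) (h0r : 0 ≤ r) (hN : 2*r+1 = 2*t^2+2*t*d+d^2)
    (α β : ℤ) (hB : 2*t*α + d*β = 1) :
    ∃ a b k, -r ≤ k ∧ k ≤ r ∧ a*t - b*(t+d) = x + k ∧ a*(t+d) + b*t = y - k := by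
  obtain ⟨a₁, ha₁⟩ : ∃ a : ℤ, a = α*(x+y) := ⟨_, rfl⟩
  obtain ⟨b₁, hb₁⟩ : ∃ b : ℤ, b = (α-β)*(x+y) := ⟨_, rfl⟩
  have hsum : a₁*(2*t+d) - b₁*d = x + y := by rw [ha₁, hb₁]; linear_combination (x+y) * hB
  obtain ⟨k₁, hk₁⟩ : ∃ k : ℤ, k = a₁*t - b₁*(t+d) - x := ⟨_, rfl⟩
  have h1 : a₁*t - b₁*(t+d) = x + k₁ := by rw [hk₁]; ring
  have h2 : a₁*(t+d) + b₁*t = y - k₁ := by rw [hk₁]; linear_combination hsum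
  obtain ⟨q, hq⟩ : ∃ q : ℤ, q = (k₁ + r) / (2*r+1) := ⟨_, rfl⟩
  obtain ⟨M, hM⟩ : ∃ M : ℤ, M = (k₁ + r) % (2*r+1) := ⟨_, rfl⟩
  have hdiv : (2*r+1) * q + M = k₁ + r := by rw [hq, hM]; exact Int.mul_ediv_add_emod _ _
  have hM0 : 0 ≤ M := by rw [hM]; exact Int.emod_nonneg _ (by omega)
  have hM1 : M < 2*r+1 := by rw [hM]; exact Int.emod_lt_of_pos _ (by omega)
  refine ⟨a₁ + q*d, b₁ + q*(2*t+d), M - r, by omega, by omega, ?_, ?_⟩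
  · linear_combination h1 + q * hN - hdiv
  · linear_combination h2 - q * hN + hdiv

lemma find_diff (t d r x y : ℤ) (h0r : 0 ≤ r) (hN : 2*r+1 = 2*t^2+2*t*d+d^2)
    (α β : ℤ) (hB : 2*t*α + d*β = 1) :
    ∃ a b k, -r ≤ k ∧ k ≤ r ∧ a*t - b*(t+d) = x + k ∧ a*(t+d) + b*t = y + k := by
  obtain ⟨a₁, ha₁⟩ : ∃ a : ℤ, a = (β-α)*(y-x) := ⟨_, rfl⟩
  obtain ⟨b₁, hb₁⟩ : ∃ b : ℤ, b = α*(y-x) := ⟨_, rfl⟩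
  have hsum : a₁*d + b₁*(2*t+d) = y - x := by rw [ha₁, hb₁]; linear_combination (y-x) * hB
  obtain ⟨k₁, hk₁⟩ : ∃ k : ℤ, k = a₁*t - b₁*(t+d) - x := ⟨_, rfl⟩
  have h1 : a₁*t - b₁*(t+d) = x + k₁ := by rw [hk₁]; ring
  have h2 : a₁*(t+d) + b₁*t = y + k₁ := by rw [hk₁]; linear_combination hsum
  obtain ⟨q, hq⟩ : ∃ q : ℤ, q = (k₁ + r) / (2*r+1) := ⟨_, rfl⟩
  obtain ⟨M, hM⟩ : ∃ M : ℤ, M = (k₁ + r) % (2*r+1) := ⟨_, rfl⟩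
  have hdiv : (2*r+1) * q + M = k₁ + r := by rw [hq, hM]; exact Int.mul_ediv_add_emod _ _
  have hM0 : 0 ≤ M := by rw [hM]; exact Int.emod_nonneg _ (by omega)
  have hM1 : M < 2*r+1 := by rw [hM]; exact Int.emod_lt_of_pos _ (by omega)
  refine ⟨a₁ - q*(2*t+d), b₁ + q*d, M - r, by omega, by omega, ?_, ?_⟩
  · linear_combination h1 + q * hN - hdiv
  · linear_combination h2 + q * hN - hdiv
lemma mem_URm' (r k : ℤ) (v : ℤ × ℤ) (h0 : 0 ≤ k) (h1 : k ≤ r) :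
    ((v.1 + k, v.2 + (r - k)) : ℤ × ℤ) ∈ URm r v := by
  show 0 ≤ v.1 + k - v.1 ∧ 0 ≤ v.2 + (r - k) - v.2 ∧
    |v.1 + k - v.1| + |v.2 + (r - k) - v.2| = r
  rw [add_sub_cancel_left, add_sub_cancel_left, abs_of_nonneg h0,
    abs_of_nonneg (by omega : (0:ℤ) ≤ r - k)]
  omega

lemma mem_BLp' (r k : ℤ) (v : ℤ × ℤ) (h0 : -r ≤ k) (h1 : k < 0) :
    ((v.1 + k, v.2 + (-(r+1) - k)) : ℤ × ℤ) ∈ BLp r v := by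
  show v.1 + k - v.1 < 0 ∧ v.2 + (-(r+1) - k) - v.2 < 0 ∧
    |v.1 + k - v.1| + |v.2 + (-(r+1) - k) - v.2| = r + 1
  rw [add_sub_cancel_left, add_sub_cancel_left, abs_of_neg h1,
    abs_of_neg (by omega : -(r+1) - k < 0)]
  omega

lemma mem_ULm' (r k : ℤ) (v : ℤ × ℤ) (h0 : -r ≤ k) (h1 : k ≤ 0) :
    ((v.1 + k, v.2 + (r + k)) : ℤ × ℤ) ∈ ULm r v := by
  show v.1 + k - v.1 ≤ 0 ∧ 0 ≤ v.2 + (r + k) - v.2 ∧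
    |v.1 + k - v.1| + |v.2 + (r + k) - v.2| = r
  rw [add_sub_cancel_left, add_sub_cancel_left, abs_of_nonpos h1,
    abs_of_nonneg (by omega : (0:ℤ) ≤ r + k)]
  omega

lemma mem_BRp' (r k : ℤ) (v : ℤ × ℤ) (h0 : 0 < k) (h1 : k ≤ r) :
    ((v.1 + k, v.2 + (k - (r+1))) : ℤ × ℤ) ∈ BRp r v := by
  show v.2 + (k - (r+1)) - v.2 < 0 ∧ 0 < v.1 + k - v.1 ∧
    |v.1 + k - v.1| + |v.2 + (k - (r+1)) - v.2| = r + 1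
  rw [add_sub_cancel_left, add_sub_cancel_left, abs_of_pos h0,
    abs_of_neg (by omega : k - (r+1) < 0)]
  omega

lemma mem_BRm' (r k : ℤ) (v : ℤ × ℤ) (h0 : 0 ≤ k) (h1 : k ≤ r) :
    ((v.1 + k, v.2 + (k - r)) : ℤ × ℤ) ∈ BRm r v := by
  show v.2 + (k - r) - v.2 ≤ 0 ∧ 0 ≤ v.1 + k - v.1 ∧
    |v.1 + k - v.1| + |v.2 + (k - r) - v.2| = r
  rw [add_sub_cancel_left, add_sub_cancel_left, abs_of_nonneg h0,
    abs_of_nonpos (by omega : k - r ≤ 0)]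
  omega

lemma mem_ULp' (r k : ℤ) (v : ℤ × ℤ) (h0 : -r ≤ k) (h1 : k < 0) :
    ((v.1 + k, v.2 + (k + r + 1)) : ℤ × ℤ) ∈ ULp r v := by
  show v.1 + k - v.1 < 0 ∧ 0 < v.2 + (k + r + 1) - v.2 ∧
    |v.1 + k - v.1| + |v.2 + (k + r + 1) - v.2| = r + 1
  rw [add_sub_cancel_left, add_sub_cancel_left, abs_of_neg h1,
    abs_of_pos (by omega : 0 < k + r + 1)]
  omega

lemma mem_BLm' (r k : ℤ) (v : ℤ × ℤ) (h0 : -r ≤ k) (h1 : k ≤ 0) :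
    ((v.1 + k, v.2 + (-r - k)) : ℤ × ℤ) ∈ BLm r v := by
  show v.1 + k - v.1 ≤ 0 ∧ v.2 + (-r - k) - v.2 ≤ 0 ∧
    |v.1 + k - v.1| + |v.2 + (-r - k) - v.2| = r
  rw [add_sub_cancel_left, add_sub_cancel_left, abs_of_nonpos h1,
    abs_of_nonpos (by omega : -r - k ≤ 0)]
  omega

lemma mem_URp' (r k : ℤ) (v : ℤ × ℤ) (h0 : 0 < k) (h1 : k ≤ r) :
    ((v.1 + k, v.2 + (r + 1 - k)) : ℤ × ℤ) ∈ URp r v := by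
  show 0 < v.1 + k - v.1 ∧ 0 < v.2 + (r + 1 - k) - v.2 ∧
    |v.1 + k - v.1| + |v.2 + (r + 1 - k) - v.2| = r + 1
  rw [add_sub_cancel_left, add_sub_cancel_left, abs_of_pos h0,
    abs_of_pos (by omega : 0 < r + 1 - k)]
  omega

/-- Let t, d be positive integers with gcd(2t, d) = 1 and let
r = t² + dt + (d² − 1)/2. Then for every v ∈ ℤ², the ball B_r(v) is r-fixed by C_{t,d};
that is, C_{t,d} contains at least one point in each of the four sets UR⁻_r(v) ∪ BL⁺_r(v),
UL⁻_r(v) ∪ BR⁺_r(v), BR⁻_r(v) ∪ UL⁺_r(v), and BL⁻_r(v) ∪ UR⁺_r(v). -/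
theorem stmt_4 (t d : ℤ) (ht : 0 < t) (hd : 0 < d) (hg : Int.gcd (2 * t) d = 1)
    (r : ℤ) (hr : r = t ^ 2 + d * t + (d ^ 2 - 1) / 2) (v : ℤ × ℤ) :
    ((Ctd t d : Set (ℤ × ℤ)) ∩ (URm r v ∪ BLp r v)).Nonempty ∧
    ((Ctd t d : Set (ℤ × ℤ)) ∩ (ULm r v ∪ BRp r v)).Nonempty ∧
    ((Ctd t d : Set (ℤ × ℤ)) ∩ (BRm r v ∪ ULp r v)).Nonempty ∧
    ((Ctd t d : Set (ℤ × ℤ)) ∩ (BLm r v ∪ URp r v)).Nonempty := by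
  -- d is odd
  have hd2 : d % 2 = 1 := by
    rcases Int.even_or_odd d with he | ho
    · exfalso
      have h2 : (2:ℤ) ∣ (Int.gcd (2*t) d : ℤ) :=
        Int.dvd_coe_gcd ⟨t, by ring⟩ he.two_dvd
      rw [hg] at h2
      norm_num at h2
    · obtain ⟨j, hj⟩ := ho; omega
  have hdvd : (2:ℤ) ∣ d^2 - 1 := by
    obtain ⟨j, hj⟩ : ∃ j, d = 2*j+1 := ⟨d/2, by omega⟩
    exact ⟨2*j^2+2*j, by rw [hj]; ring⟩
  have hN : 2*r+1 = 2*t^2+2*t*d+d^2 := by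
    rw [hr]; linear_combination Int.ediv_mul_cancel hdvd
  have h0r : 0 ≤ r := by nlinarith [sq_nonneg t, sq_nonneg d, mul_pos ht hd]
  -- Bézout coefficients
  obtain ⟨α, β, hB⟩ : ∃ α β : ℤ, 2*t*α + d*β = 1 := by
    refine ⟨Int.gcdA (2*t) d, Int.gcdB (2*t) d, ?_⟩
    have h := Int.gcd_eq_gcd_ab (2*t) d
    rw [show (2*t).gcd d = 1 from hg] at h
    push_cast at h
    linarith
  refine ⟨?_, ?_, ?_, ?_⟩
  · -- URm ∪ BLp
    obtain ⟨a, b, k, hk1, hk2, e1, e2⟩ := find_sum t d r v.1 (v.2 + r) h0r hN α β hB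
    by_cases hk : 0 ≤ k
    · refine ⟨(a*t - b*(t+d), a*(t+d) + b*t), mem_Ctd t d a b, Or.inl ?_⟩
      have heq : ((a*t - b*(t+d), a*(t+d) + b*t) : ℤ × ℤ) = (v.1 + k, v.2 + (r - k)) := by
        rw [Prod.ext_iff]; exact ⟨e1, by linear_combination e2⟩
      rw [heq]; exact mem_URm' r k v hk hk2
    · refine ⟨((a-(t+d))*t - (b-t)*(t+d), (a-(t+d))*(t+d) + (b-t)*t),
        mem_Ctd t d (a-(t+d)) (b-t), Or.inr ?_⟩
      have heq : (((a-(t+d))*t - (b-t)*(t+d), (a-(t+d))*(t+d) + (b-t)*t) : ℤ × ℤ)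
          = (v.1 + k, v.2 + (-(r+1) - k)) := by
        rw [Prod.ext_iff]; exact ⟨by linear_combination e1, by linear_combination e2 + hN⟩
      rw [heq]; exact mem_BLp' r k v hk1 (by omega)
  · -- ULm ∪ BRp
    obtain ⟨a, b, k, hk1, hk2, e1, e2⟩ := find_diff t d r v.1 (v.2 + r) h0r hN α β hB
    by_cases hk : k ≤ 0
    · refine ⟨(a*t - b*(t+d), a*(t+d) + b*t), mem_Ctd t d a b, Or.inl ?_⟩
      have heq : ((a*t - b*(t+d), a*(t+d) + b*t) : ℤ × ℤ) = (v.1 + k, v.2 + (r + k)) := by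
        rw [Prod.ext_iff]; exact ⟨e1, by linear_combination e2⟩
      rw [heq]; exact mem_ULm' r k v hk1 hk
    · refine ⟨((a-(t+d))*t - (b-t)*(t+d), (a-(t+d))*(t+d) + (b-t)*t),
        mem_Ctd t d (a-(t+d)) (b-t), Or.inr ?_⟩
      have heq : (((a-(t+d))*t - (b-t)*(t+d), (a-(t+d))*(t+d) + (b-t)*t) : ℤ × ℤ)
          = (v.1 + k, v.2 + (k - (r+1))) := by
        rw [Prod.ext_iff]; exact ⟨by linear_combination e1, by linear_combination e2 + hN⟩
      rw [heq]; exact mem_BRp' r k v (by omega) hk2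
  · -- BRm ∪ ULp
    obtain ⟨a, b, k, hk1, hk2, e1, e2⟩ := find_diff t d r v.1 (v.2 - r) h0r hN α β hB
    by_cases hk : 0 ≤ k
    · refine ⟨(a*t - b*(t+d), a*(t+d) + b*t), mem_Ctd t d a b, Or.inl ?_⟩
      have heq : ((a*t - b*(t+d), a*(t+d) + b*t) : ℤ × ℤ) = (v.1 + k, v.2 + (k - r)) := by
        rw [Prod.ext_iff]; exact ⟨e1, by linear_combination e2⟩
      rw [heq]; exact mem_BRm' r k v hk hk2
    · refine ⟨((a+(t+d))*t - (b+t)*(t+d), (a+(t+d))*(t+d) + (b+t)*t),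
        mem_Ctd t d (a+(t+d)) (b+t), Or.inr ?_⟩
      have heq : (((a+(t+d))*t - (b+t)*(t+d), (a+(t+d))*(t+d) + (b+t)*t) : ℤ × ℤ)
          = (v.1 + k, v.2 + (k + r + 1)) := by
        rw [Prod.ext_iff]; exact ⟨by linear_combination e1, by linear_combination e2 - hN⟩
      rw [heq]; exact mem_ULp' r k v hk1 (by omega)
  · -- BLm ∪ URp
    obtain ⟨a, b, k, hk1, hk2, e1, e2⟩ := find_sum t d r v.1 (v.2 - r) h0r hN α β hB
    by_cases hk : k ≤ 0
    · refine ⟨(a*t - b*(t+d), a*(t+d) + b*t), mem_Ctd t d a b, Or.inl ?_⟩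
      have heq : ((a*t - b*(t+d), a*(t+d) + b*t) : ℤ × ℤ) = (v.1 + k, v.2 + (-r - k)) := by
        rw [Prod.ext_iff]; exact ⟨e1, by linear_combination e2⟩
      rw [heq]; exact mem_BLm' r k v hk1 hk
    · refine ⟨((a+(t+d))*t - (b+t)*(t+d), (a+(t+d))*(t+d) + (b+t)*t),
        mem_Ctd t d (a+(t+d)) (b+t), Or.inr ?_⟩
      have heq : (((a+(t+d))*t - (b+t)*(t+d), (a+(t+d))*(t+d) + (b+t)*t) : ℤ × ℤ)
          = (v.1 + k, v.2 + (r + 1 - k)) := by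
        rw [Prod.ext_iff]; exact ⟨by linear_combination e1, by linear_combination e2 - hN⟩
      rw [heq]; exact mem_URp' r k v (by omega) hk2
end

section
/- Let t, d be positive integers with gcd(2t, d) = 1 and let r = t² + dt + (d² − 1)/2. Then C_{t,d} is an r-identifying code in the grid graph ℤ². -/
/-- The ℓ1 (grid-graph) distance on ℤ². -/
def dist1 (v w : ℤ × ℤ) : ℤ := |v.1 - w.1| + |v.2 - w.2|

/-- The ball of radius `r` around `v` in the grid graph. -/
def ball1 (r : ℤ) (v : ℤ × ℤ) : Set (ℤ × ℤ) := {w | dist1 v w ≤ r}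

/-- `K_r(v)` : the set of codewords of `C` that `r`-cover `v`. -/
def Kset (C : Set (ℤ × ℤ)) (r : ℤ) (v : ℤ × ℤ) : Set (ℤ × ℤ) := C ∩ ball1 r v

/-- A code `C` is `r`-identifying in the grid graph if all the sets `K_r(v)` are nonempty
and pairwise distinct. -/
def IsIdentifying (C : Set (ℤ × ℤ)) (r : ℤ) : Prop :=
  (∀ v, (Kset C r v).Nonempty) ∧ ∀ v w, v ≠ w → Kset C r v ≠ Kset C r w


lemma mul_bounds_zero {n k : ℤ} (hn : 0 < n) (h1 : -n < n*k) (h2 : n*k < n) : k = 0 := by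
  have h3 : k < 1 := by
    have : n * k < n * 1 := by linarith
    exact lt_of_mul_lt_mul_left this (le_of_lt hn)
  have h4 : -1 < k := by
    have : n * (-1) < n * k := by linarith
    have := lt_of_mul_lt_mul_left this (le_of_lt hn)
    linarith
  omega

lemma core (N m : ℤ) (hN5 : 5 ≤ N) (hNodd : N % 2 = 1) (hm : N ∣ m^2+1)
    (f : ℤ → ℤ) (hfc : ∀ u, N ∣ (f u - m*u))
    (a c L W : ℤ) (hW1 : 1 ≤ W) (hWL : W ≤ L) (hWN : W ≤ N)
    (hL1 : L = 1 → (2:ℤ) ∣ (a + c))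
    (hstrip : ∀ j : ℤ, 0 ≤ j → j < L →
      ¬ (2:ℤ) ∣ (a + j + f (a+j)) ∧ c ≤ f (a+j) ∧ f (a+j) ≤ c + W - 1) : False := by
  have hcop2N : IsCoprime (2:ℤ) N := ⟨-(N/2), 1, by omega⟩
  rcases eq_or_lt_of_le (show 1 ≤ L by linarith) with hL | hL2
  · obtain ⟨hp, h1, h2⟩ := hstrip 0 le_rfl (by omega)
    have := hL1 hL.symm
    omega
  · -- L ≥ 2
    obtain ⟨s0, hs0⟩ : ∃ s : ℤ, s = f (a+1) - f a := ⟨_, rfl⟩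
    have steq : ∀ j : ℤ, 0 ≤ j → j + 1 < L → f (a+(j+1)) - f (a+j) = s0 := by
      intro j hj hjL
      obtain ⟨hp0, hl0, hu0⟩ := hstrip 0 le_rfl (by omega)
      obtain ⟨hp1, hl1, hu1⟩ := hstrip 1 (by omega) (by omega)
      obtain ⟨hpj, hlj, huj⟩ := hstrip j hj (by omega)
      obtain ⟨hpj1, hlj1, huj1⟩ := hstrip (j+1) (by omega) (by omega)
      simp only [add_zero] at hp0 hl0 hu0
      have hdvdN : N ∣ (f (a+(j+1)) - f (a+j)) - s0 := by
        have h1 := hfc (a+(j+1)); have h2 := hfc (a+j); have h3 := hfc (a+1); have h4 := hfc a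
        have he : (f (a+(j+1)) - f (a+j)) - s0
            = ((f (a+(j+1)) - m*(a+(j+1))) - (f (a+j) - m*(a+j))) - (f (a+1) - m*(a+1)) + (f a - m*a) := by
          rw [hs0]; ring
        rw [he]
        exact dvd_add (dvd_sub (dvd_sub h1 h2) h3) h4
      have hdvd2 : (2:ℤ) ∣ (f (a+(j+1)) - f (a+j)) - s0 := by
        rw [hs0]; omega
      have hdvd2N : (2*N) ∣ (f (a+(j+1)) - f (a+j)) - s0 := hcop2N.mul_dvd hdvd2 hdvdN
      obtain ⟨k, hk⟩ := hdvd2N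
      have hb1 : s0 ≤ W - 1 := by rw [hs0]; omega
      have hb2 : -(W-1) ≤ s0 := by rw [hs0]; omega
      have hk0 : k = 0 := by
        refine mul_bounds_zero (show (0:ℤ) < 2*N by linarith) ?_ ?_ <;> omega
      subst hk0
      simp only [mul_zero] at hk
      omega
    have tele : ∀ j : ℕ, (j:ℤ) < L → f (a + (j:ℤ)) = f a + (j:ℤ) * s0 := by
      intro j
      induction j with
      | zero => intro _; norm_num
      | succ n ih =>
        intro h
        have hc : ((n+1 : ℕ) : ℤ) = (n:ℤ) + 1 := by push_cast; ring
        rw [hc]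
        have h1 := steq (n:ℤ) (by positivity) (by omega)
        have h2 := ih (by omega)
        linarith
    obtain ⟨j0, hj0⟩ : ∃ j : ℕ, (j:ℤ) = L - 1 := ⟨(L-1).toNat, Int.toNat_of_nonneg (by omega)⟩
    have hT := tele j0 (by omega)
    rw [hj0] at hT
    obtain ⟨hp0, hl0, hu0⟩ := hstrip 0 le_rfl (by omega)
    obtain ⟨hp1, hl1, hu1⟩ := hstrip 1 (by omega) (by omega)
    obtain ⟨hpE, hlE, huE⟩ := hstrip (L-1) (by omega) (by omega)
    simp only [add_zero] at hp0 hl0 hu0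
    -- bounds on (L-1)*s0
    have hB1 : (L-1)*s0 ≤ W - 1 := by omega
    have hB2 : -(W-1) ≤ (L-1)*s0 := by omega
    have hs1 : s0 ≤ 1 := by
      by_contra hs
      push_neg at hs
      nlinarith
    have hs2 : -1 ≤ s0 := by
      by_contra hs
      push_neg at hs
      nlinarith
    have hsodd : ¬ (2:ℤ) ∣ s0 := by rw [hs0]; omega
    have hspm : s0 = 1 ∨ s0 = -1 := by omega
    have hdvdm : N ∣ s0 - m := by
      have h3 := hfc (a+1); have h4 := hfc a
      have he : s0 - m = (f (a+1) - m*(a+1)) - (f a - m*a) := by rw [hs0]; ring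
      rw [he]; exact dvd_sub h3 h4
    obtain ⟨q, hq⟩ := hdvdm
    have hdm1 : N ∣ m^2 - 1 := by
      rcases hspm with rfl | rfl
      · exact ⟨q * (-(1+m)), by linear_combination (-(1+m))*hq⟩
      · exact ⟨q * (1-m), by linear_combination (1-m)*hq⟩
    have h2 : N ∣ (2:ℤ) := by
      have he : (2:ℤ) = (m^2+1) - (m^2-1) := by ring
      rw [he]; exact dvd_sub hm hdm1
    have := Int.le_of_dvd (by norm_num) h2
    omega

lemma cover_core (N m r : ℤ) (hN5 : 5 ≤ N) (hNodd : N % 2 = 1) (hm : N ∣ m^2+1)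
    (hrN : 2*r + 1 = N) (u0 w0 : ℤ) (hpar : (2:ℤ) ∣ u0 + w0) :
    ∃ u w : ℤ, (2:ℤ) ∣ u + w ∧ N ∣ w - m*u ∧ u0 - r ≤ u ∧ u ≤ u0 + r ∧ w0 - r ≤ w ∧ w ≤ w0 + r := by
  by_contra hcon
  push_neg at hcon
  set f : ℤ → ℤ := fun u => (w0 - r) + (m*u - (w0-r)) % N with hf
  have hfc : ∀ u, N ∣ f u - m*u := by
    intro u
    have hdef := Int.emod_def (m*u - (w0-r)) N
    have he : f u - m*u = N * (-((m*u - (w0-r)) / N)) := by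
      simp only [hf]
      linarith
    exact ⟨_, he⟩
  have hbounds : ∀ u, w0 - r ≤ f u ∧ f u ≤ w0 + r := by
    intro u
    have h1 := Int.emod_nonneg (m*u - (w0-r)) (show N ≠ 0 by omega)
    have h2 := Int.emod_lt_of_pos (m*u - (w0-r)) (show 0 < N by omega)
    constructor <;> simp only [hf] <;> omega
  refine core N m hN5 hNodd hm f hfc (u0 - r) (w0 - r) N N (by omega) le_rfl le_rfl (by omega) ?_
  intro j hj hjL
  have hb := hbounds (u0 - r + j)
  refine ⟨?_, by omega, by omega⟩
  intro hpar2
  have := hcon (u0 - r + j) (f (u0 - r + j)) hpar2 (hfc _) (by omega) (by omega) (by omega)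
  omega

lemma sep_core (N m r : ℤ) (hN5 : 5 ≤ N) (hNodd : N % 2 = 1) (hm : N ∣ m^2+1)
    (hrN : 2*r + 1 = N) (u1 w1 u2 w2 : ℤ)
    (hp1 : (2:ℤ) ∣ u1 + w1) (hp2 : (2:ℤ) ∣ u2 + w2)
    (hD : 1 ≤ u2 - u1) (hE1 : w2 - w1 ≤ u2 - u1) (hE2 : w1 - w2 ≤ u2 - u1)
    (H : ∀ u w : ℤ, (2:ℤ) ∣ u + w → N ∣ w - m*u →
      ((u1 - r ≤ u ∧ u ≤ u1 + r ∧ w1 - r ≤ w ∧ w ≤ w1 + r) ↔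
       (u2 - r ≤ u ∧ u ≤ u2 + r ∧ w2 - r ≤ w ∧ w ≤ w2 + r))) : False := by
  rcases le_or_gt N (u2 - u1) with hbig | hsmall
  · obtain ⟨u, w, hpw, hcw, h1, h2, h3, h4⟩ := cover_core N m r hN5 hNodd hm hrN u1 w1 hp1
    have := (H u w hpw hcw).mp ⟨h1, h2, h3, h4⟩
    omega
  · set f : ℤ → ℤ := fun u => (w1 - r) + (m*u - (w1-r)) % N with hf
    have hfc : ∀ u, N ∣ f u - m*u := by
      intro u
      have hdef := Int.emod_def (m*u - (w1-r)) N
      have he : f u - m*u = N * (-((m*u - (w1-r)) / N)) := by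
        simp only [hf]
        linarith
      exact ⟨_, he⟩
    have hbounds : ∀ u, w1 - r ≤ f u ∧ f u ≤ w1 + r := by
      intro u
      have h1 := Int.emod_nonneg (m*u - (w1-r)) (show N ≠ 0 by omega)
      have h2 := Int.emod_lt_of_pos (m*u - (w1-r)) (show 0 < N by omega)
      constructor <;> simp only [hf] <;> omega
    have key : ∀ j : ℤ, 0 ≤ j → j < u2 - u1 →
        ¬ (2:ℤ) ∣ (u1 - r + j + f (u1 - r + j)) := by
      intro j hj hjd h2
      have hb := hbounds (u1 - r + j)
      have := (H (u1 - r + j) (f (u1 - r + j)) h2 (hfc _)).mp ⟨by omega, by omega, by omega, by omega⟩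
      omega
    have key2 : ∀ j : ℤ, 0 ≤ j → j < u2 - u1 →
        ¬ (w2 - r ≤ f (u1 - r + j) ∧ f (u1 - r + j) ≤ w2 + r) := by
      rintro j hj hjd ⟨hA, hB⟩
      have hb := hbounds (u1 - r + j)
      have hpar : (2:ℤ) ∣ (u1 - r + j + N + f (u1 - r + j)) := by
        have := key j hj hjd; omega
      have hc : N ∣ f (u1 - r + j) - m * (u1 - r + j + N) := by
        have h1 := hfc (u1 - r + j)
        have he : f (u1 - r + j) - m * (u1 - r + j + N)
            = (f (u1-r+j) - m*(u1-r+j)) + N * (-m) := by ring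
        rw [he]
        exact dvd_add h1 ⟨-m, rfl⟩
      have := (H (u1 - r + j + N) (f (u1-r+j)) hpar hc).mpr ⟨by omega, by omega, by omega, by omega⟩
      omega
    rcases lt_trichotomy (w2 - w1) 0 with hneg | hzero | hpos
    · refine core N m hN5 hNodd hm f hfc (u1 - r) (w2 + r + 1) (u2 - u1) (w1 - w2)
        (by omega) (by omega) (by omega) (by intro h1; omega) ?_
      intro j hj hjL
      have hb := hbounds (u1 - r + j)
      have hk2 := key2 j hj hjL
      exact ⟨key j hj hjL, by omega, by omega⟩
    · have hb := hbounds (u1 - r + 0)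
      exact key2 0 le_rfl (by omega) ⟨by omega, by omega⟩
    · refine core N m hN5 hNodd hm f hfc (u1 - r) (w1 - r) (u2 - u1) (w2 - w1)
        (by omega) (by omega) (by omega) (by intro h1; omega) ?_
      intro j hj hjL
      have hb := hbounds (u1 - r + j)
      have hk2 := key2 j hj hjL
      exact ⟨key j hj hjL, by omega, by omega⟩

lemma mem_Ctd_iff (t d : ℤ) (hNne : (2*t^2+2*t*d+d^2) ≠ 0)
    (hcop : IsCoprime (2*t^2+2*t*d+d^2) t) (x y : ℤ) :
    (x, y) ∈ Ctd t d ↔ (2*t^2+2*t*d+d^2) ∣ (t*x + (t+d)*y) := by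
  constructor
  · intro h
    have key : ∀ v : ℤ×ℤ, v ∈ Ctd t d → (2*t^2+2*t*d+d^2) ∣ (t*v.1 + (t+d)*v.2) := by
      intro v hv
      induction hv using AddSubgroup.closure_induction with
      | mem z hz =>
        rcases hz with hz | hz
        · subst hz; exact ⟨1, by ring⟩
        · simp only [Set.mem_singleton_iff] at hz; subst hz; exact ⟨0, by ring⟩
      | zero => exact ⟨0, by simp⟩
      | add p q hp hq ihp ihq =>
        have he : t*(p+q).1 + (t+d)*(p+q).2 = (t*p.1 + (t+d)*p.2) + (t*q.1 + (t+d)*q.2) := by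
          simp [Prod.fst_add, Prod.snd_add]; ring
        rw [he]; exact dvd_add ihp ihq
      | neg p hp ihp =>
        have he : t*(-p).1 + (t+d)*(-p).2 = -(t*p.1 + (t+d)*p.2) := by
          simp; ring
        rw [he]; exact dvd_neg.mpr ihp
    exact key (x,y) h
  · rintro ⟨k, hk⟩
    have h2 : (2*t^2+2*t*d+d^2) ∣ (t*y - (t+d)*x) := by
      refine hcop.dvd_of_dvd_mul_left ⟨y - (t+d)*k, ?_⟩
      linear_combination (-(t+d))*hk
    obtain ⟨b, hb⟩ := h2
    have hx : x = k*t - b*(t+d) := by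
      have hNx : (2*t^2+2*t*d+d^2)*x = (2*t^2+2*t*d+d^2)*(k*t - b*(t+d)) := by
        linear_combination t*hk - (t+d)*hb
      exact mul_left_cancel₀ hNne hNx
    have hy : y = k*(t+d) + b*t := by
      have hNy : (2*t^2+2*t*d+d^2)*y = (2*t^2+2*t*d+d^2)*(k*(t+d) + b*t) := by
        linear_combination (t+d)*hk + t*hb
      exact mul_left_cancel₀ hNne hNy
    have hxy : (x, y) = k • ((t:ℤ), t+d) + b • (-(t+d), (t:ℤ)) := by
      simp only [Prod.smul_mk, smul_eq_mul, Prod.mk_add_mk, Prod.mk.injEq]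
      constructor <;> [linarith [hx]; linarith [hy]]
    rw [hxy]
    exact AddSubgroup.add_mem _
      (AddSubgroup.zsmul_mem _ (AddSubgroup.subset_closure (by simp)) k)
      (AddSubgroup.zsmul_mem _ (AddSubgroup.subset_closure (by simp)) b)

lemma setup (t d : ℤ) (ht : 0 < t) (hd : 0 < d) (hg : Int.gcd (2 * t) d = 1) :
    5 ≤ 2*t^2+2*t*d+d^2 ∧ (2*t^2+2*t*d+d^2) % 2 = 1 ∧
    ∃ m : ℤ, (2*t^2+2*t*d+d^2) ∣ m^2 + 1 ∧
      ∀ x y : ℤ, ((x,y) ∈ Ctd t d ↔ (2*t^2+2*t*d+d^2) ∣ ((y - x) - m*(x+y))) := by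
  have hcop2td : IsCoprime (2*t) d := Int.isCoprime_iff_gcd_eq_one.mpr hg
  have hcop_td : IsCoprime t d := IsCoprime.of_mul_left_right hcop2td
  have hcop_2d : IsCoprime (2:ℤ) d := IsCoprime.of_mul_left_left hcop2td
  have hdodd : ¬ (2:ℤ) ∣ d := by
    intro h2
    have := IsCoprime.isUnit_of_dvd' hcop_2d dvd_rfl h2
    rw [Int.isUnit_iff] at this
    omega
  -- N ≥ 5
  have ht1 : 1 ≤ t := ht
  have hd1 : 1 ≤ d := hd
  have e1 : 1 ≤ t*t := mul_le_mul ht1 ht1 (by norm_num) (by omega)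
  have e2 : 1 ≤ t*d := mul_le_mul ht1 hd1 (by norm_num) (by omega)
  have e3 : 1 ≤ d*d := mul_le_mul hd1 hd1 (by norm_num) (by omega)
  have hN5 : 5 ≤ 2*t^2+2*t*d+d^2 := by nlinarith
  -- N odd
  have hNodd : (2*t^2+2*t*d+d^2) % 2 = 1 := by
    obtain ⟨k, hk⟩ : ∃ k, d = 2*k+1 := ⟨d/2, by omega⟩
    obtain ⟨X, hX⟩ : ∃ X, 2*t^2+2*t*d+d^2 = 2*X + 1 := ⟨t^2 + t*d + 2*k^2 + 2*k, by rw [hk]; ring⟩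
    omega
  refine ⟨hN5, hNodd, ?_⟩
  -- coprimalities with N
  have hcop_tN : IsCoprime t (2*t^2+2*t*d+d^2) := by
    have h1 : IsCoprime t (d^2) := hcop_td.pow_right
    have h2 := h1.add_mul_left_right (2*t + 2*d)
    have he : d^2 + t*(2*t+2*d) = 2*t^2+2*t*d+d^2 := by ring
    rwa [he] at h2
  have hcop_dN : IsCoprime d (2*t^2+2*t*d+d^2) := by
    have h1 : IsCoprime d ((2*t)*t) := hcop2td.symm.mul_right hcop_td.symm
    have h2 := h1.add_mul_left_right (2*t + d)
    have he : (2*t)*t + d*(2*t+d) = 2*t^2+2*t*d+d^2 := by ring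
    rwa [he] at h2
  obtain ⟨α, β, hαβ⟩ := id hcop_dN
  refine ⟨-(2*t+d)*α, ?_, ?_⟩
  · -- N ∣ m² + 1
    have hkey : d^2*((-(2*t+d)*α)^2 + 1)
        = (2*t^2+2*t*d+d^2) * (2 + (2*t+d)^2*β*(β*(2*t^2+2*t*d+d^2) - 2)) := by
      linear_combination ((2*t+d)^2*(α*d + 1 - β*(2*t^2+2*t*d+d^2))) * hαβ
    have hcop' : IsCoprime (2*t^2+2*t*d+d^2) (d^2) := (hcop_dN.symm.pow_right)
    exact hcop'.dvd_of_dvd_mul_left ⟨_, hkey⟩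
  · intro x y
    rw [mem_Ctd_iff t d (by omega) hcop_tN.symm]
    constructor
    · rintro ⟨k, hk⟩
      exact ⟨2*α*k + β*(y-x), by linear_combination (2*α)*hk - (y-x)*hαβ⟩
    · rintro ⟨k, hk⟩
      have h2 : (2*t^2+2*t*d+d^2) ∣ 2*(t*x + (t+d)*y) :=
        ⟨d*k + (2*t+d)*β*(x+y), by linear_combination d*hk - ((2*t+d)*(x+y))*hαβ⟩
      obtain ⟨X, hX⟩ : ∃ X, 2*t^2+2*t*d+d^2 = 2*X+1 := ⟨(2*t^2+2*t*d+d^2)/2, by omega⟩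
      have hcop2N : IsCoprime (2*t^2+2*t*d+d^2) 2 := ⟨1, -X, by linear_combination hX⟩
      exact hcop2N.dvd_of_dvd_mul_left h2

lemma dist_le_iff (v : ℤ × ℤ) (x y r : ℤ) :
    dist1 v (x, y) ≤ r ↔
      ((v.1 + v.2) - r ≤ x + y ∧ x + y ≤ (v.1 + v.2) + r ∧
       (v.2 - v.1) - r ≤ y - x ∧ y - x ≤ (v.2 - v.1) + r) := by
  simp only [dist1, Int.abs_eq_natAbs]
  omega

/-- Let t, d be positive integers with gcd(2t, d) = 1 and let
r = t² + dt + (d² − 1)/2. Then C_{t,d} is an r-identifying code in the grid graph ℤ². -/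
theorem stmt_5 (t d : ℤ) (ht : 0 < t) (hd : 0 < d) (hg : Int.gcd (2 * t) d = 1)
    (r : ℤ) (hr : r = t ^ 2 + d * t + (d ^ 2 - 1) / 2) :
    IsIdentifying (Ctd t d) r := by
  obtain ⟨hN5, hNodd, m, hm, hchar⟩ := setup t d ht hd hg
  have hrN : 2*r + 1 = 2*t^2+2*t*d+d^2 := by
    obtain ⟨k, hk⟩ : ∃ k, d = 2*k+1 := by
      refine ⟨d/2, ?_⟩
      have h2 : ¬ (2:ℤ) ∣ d := by
        rintro ⟨e, he⟩
        obtain ⟨X, hX⟩ : ∃ X, 2*t^2+2*t*d+d^2 = 2*X := ⟨t^2+t*d+2*e^2, by rw [he]; ring⟩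
        omega
      omega
    have e1 : d^2 - 1 = (2*k^2+2*k)*2 := by rw [hk]; ring
    have e2 : (d^2 - 1)/2 = 2*k^2+2*k := by rw [e1]; exact Int.mul_ediv_cancel _ (by norm_num)
    rw [hr, e2, hk]; ring
  have hcover : ∀ v : ℤ × ℤ, (Kset (Ctd t d : Set (ℤ × ℤ)) r v).Nonempty := by
    intro v
    obtain ⟨u, w, hpw, hcw, h1, h2, h3, h4⟩ := cover_core _ m r hN5 hNodd hm hrN
      (v.1 + v.2) (v.2 - v.1) ⟨v.2, by ring⟩
    obtain ⟨x, y, hx, hy⟩ : ∃ x y : ℤ, x + y = u ∧ y - x = w := by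
      exact ⟨(u - w)/2, (u + w)/2, by omega, by omega⟩
    refine ⟨(x, y), ?_, ?_⟩
    · show (x, y) ∈ (Ctd t d : Set (ℤ × ℤ))
      rw [SetLike.mem_coe, hchar x y, hx, hy]
      exact hcw
    · show dist1 v (x, y) ≤ r
      rw [dist_le_iff]
      omega
  constructor
  · exact hcover
  · intro v w hvw hK
    have H0 : ∀ p : ℤ × ℤ, p ∈ Ctd t d → (dist1 v p ≤ r ↔ dist1 w p ≤ r) := by
      intro p hp
      have h1 := Set.ext_iff.mp hK p
      simp only [Kset, Set.mem_inter_iff, SetLike.mem_coe, ball1, Set.mem_setOf_eq] at h1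
      constructor
      · intro h; exact (h1.mp ⟨hp, h⟩).2
      · intro h; exact (h1.mpr ⟨hp, h⟩).2
    have Huw : ∀ U W' : ℤ, (2:ℤ) ∣ U + W' → (2*t^2+2*t*d+d^2) ∣ W' - m*U →
        (((v.1+v.2) - r ≤ U ∧ U ≤ (v.1+v.2) + r ∧ (v.2-v.1) - r ≤ W' ∧ W' ≤ (v.2-v.1) + r) ↔
         ((w.1+w.2) - r ≤ U ∧ U ≤ (w.1+w.2) + r ∧ (w.2-w.1) - r ≤ W' ∧ W' ≤ (w.2-w.1) + r)) := by
      intro U W' hpar hcode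
      obtain ⟨x, y, hx, hy⟩ : ∃ x y : ℤ, x + y = U ∧ y - x = W' :=
        ⟨(U - W')/2, (U + W')/2, by omega, by omega⟩
      have hmem : (x, y) ∈ Ctd t d := by
        rw [hchar x y, hx, hy]; exact hcode
      have h2 := H0 (x, y) hmem
      rw [dist_le_iff, dist_le_iff] at h2
      rw [hx, hy] at h2
      exact h2
    -- rotations
    have Hrot : ∀ U W' : ℤ, (2:ℤ) ∣ U + W' → (2*t^2+2*t*d+d^2) ∣ W' - m*U →
        (((v.2-v.1) - r ≤ U ∧ U ≤ (v.2-v.1) + r ∧ (-(v.1+v.2)) - r ≤ W' ∧ W' ≤ (-(v.1+v.2)) + r) ↔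
         ((w.2-w.1) - r ≤ U ∧ U ≤ (w.2-w.1) + r ∧ (-(w.1+w.2)) - r ≤ W' ∧ W' ≤ (-(w.1+w.2)) + r)) := by
      intro U W' hpar hcode
      have hpar' : (2:ℤ) ∣ (-W') + U := by omega
      have hcode' : (2*t^2+2*t*d+d^2) ∣ U - m*(-W') := by
        obtain ⟨q, hq⟩ := hcode
        obtain ⟨s, hs⟩ := hm
        exact ⟨m*q + U*s, by linear_combination m*hq + U*hs⟩
      have h2 := Huw (-W') U hpar' hcode'
      constructor
      · rintro ⟨a1, a2, a3, a4⟩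
        obtain ⟨b1, b2, b3, b4⟩ := h2.mp ⟨by omega, by omega, by omega, by omega⟩
        exact ⟨by omega, by omega, by omega, by omega⟩
      · rintro ⟨a1, a2, a3, a4⟩
        obtain ⟨b1, b2, b3, b4⟩ := h2.mpr ⟨by omega, by omega, by omega, by omega⟩
        exact ⟨by omega, by omega, by omega, by omega⟩
    have hp1 : (2:ℤ) ∣ (v.1+v.2) + (v.2-v.1) := ⟨v.2, by ring⟩
    have hp2 : (2:ℤ) ∣ (w.1+w.2) + (w.2-w.1) := ⟨w.2, by ring⟩
    have hne : ¬ ((v.1+v.2) = (w.1+w.2) ∧ (v.2-v.1) = (w.2-w.1)) := by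
      rintro ⟨e1, e2⟩
      exact hvw (Prod.ext (by omega) (by omega))
    set D := (w.1+w.2) - (v.1+v.2) with hD
    set E := (w.2-w.1) - (v.2-v.1) with hE
    rcases le_or_gt E.natAbs D.natAbs with hcmp | hcmp
    · rcases lt_trichotomy D 0 with hD0 | hD0 | hD0
      · -- swap points
        exact sep_core _ m r hN5 hNodd hm hrN (w.1+w.2) (w.2-w.1) (v.1+v.2) (v.2-v.1)
          hp2 hp1 (by omega) (by omega) (by omega)
          (fun U W' h1 h2 => (Huw U W' h1 h2).symm)
      · exact hne (by omega)
      · exact sep_core _ m r hN5 hNodd hm hrN (v.1+v.2) (v.2-v.1) (w.1+w.2) (w.2-w.1)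
          hp1 hp2 (by omega) (by omega) (by omega) Huw
    · have hp1' : (2:ℤ) ∣ (v.2-v.1) + (-(v.1+v.2)) := ⟨-v.1, by ring⟩
      have hp2' : (2:ℤ) ∣ (w.2-w.1) + (-(w.1+w.2)) := ⟨-w.1, by ring⟩
      rcases lt_trichotomy E 0 with hE0 | hE0 | hE0
      · exact sep_core _ m r hN5 hNodd hm hrN (w.2-w.1) (-(w.1+w.2)) (v.2-v.1) (-(v.1+v.2))
          hp2' hp1' (by omega) (by omega) (by omega)
          (fun U W' h1 h2 => (Hrot U W' h1 h2).symm)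
      · exact hne (by omega)
      · exact sep_core _ m r hN5 hNodd hm hrN (v.2-v.1) (-(v.1+v.2)) (w.2-w.1) (-(w.1+w.2))
          hp1' hp2' (by omega) (by omega) (by omega) Hrot
end

section
/- Let t, d be positive integers with gcd(2t, d) = 2 and let r = t² + dt + d²/2. Then for every v ∈ ℤ², the ball B_r(v) is r-fixed by C_{t,d}; that is, C_{t,d} contains at least one point in each of the four sets UR⁻_r(v) ∪ BL⁺_r(v), UL⁻_r(v) ∪ BR⁺_r(v), BR⁻_r(v) ∪ UL⁺_r(v), and BL⁻_r(v) ∪ UR⁺_r(v). -/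
lemma memC (t d m n : ℤ) : ((m*t - n*(t+d), m*(t+d) + n*t) : ℤ×ℤ) ∈ Ctd t d := by
  have h1 : ((t, t+d) : ℤ×ℤ) ∈ Ctd t d := AddSubgroup.subset_closure (by left; rfl)
  have h2 : ((-(t+d), t) : ℤ×ℤ) ∈ Ctd t d := AddSubgroup.subset_closure (by right; rfl)
  have h := AddSubgroup.add_mem _ (AddSubgroup.zsmul_mem _ h1 m) (AddSubgroup.zsmul_mem _ h2 n)
  convert h using 2 <;> · simp [Prod.smul_def, smul_eq_mul] <;> ring

lemma diag_lemma (t d : ℤ) (ht : 0 < t) (hd : 0 < d) (hg : Int.gcd (2 * t) d = 2)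
    (r : ℤ) (hr : r = t ^ 2 + d * t + d ^ 2 / 2) (s L : ℤ) (hs : 2 ∣ s) :
    ∃ c ∈ (Ctd t d : Set (ℤ × ℤ)), c.1 + c.2 = s ∧ L ≤ c.1 ∧ c.1 ≤ L + r - 1 := by
  obtain ⟨e, he⟩ : (2:ℤ) ∣ d := by
    have h := (Int.gcd_dvd_right (2*t) d : ((Int.gcd (2*t) d : ℤ)) ∣ d)
    rw [hg] at h; exact_mod_cast h
  have hr' : r = t^2 + 2*e*t + 2*e^2 := by
    rw [hr, he, show (2*e)^2 / 2 = 2*e^2 by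
      rw [show (2*e)^2 = 2*(2*e^2) by ring, Int.mul_ediv_cancel_left _ two_ne_zero]]
  have hrpos : 0 < r := by nlinarith
  obtain ⟨q, hq⟩ := hs
  have hbez : (2:ℤ) = 2*t * Int.gcdA (2*t) d + d * Int.gcdB (2*t) d := by
    rw [← Int.gcd_eq_gcd_ab (2*t) d, hg]; norm_num
  set A := Int.gcdA (2*t) d with hA
  set B := Int.gcdB (2*t) d with hB
  set m : ℤ := q * A with hm
  set n : ℤ := q * A - q * B with hn
  set p1 : ℤ := m*t - n*(t+d) with hp1
  set k : ℤ := (p1 - L) / r with hk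
  refine ⟨((m + k*e)*t - (n + k*(t+e))*(t+d), (m + k*e)*(t+d) + (n + k*(t+e))*t),
    memC t d _ _, ?_, ?_, ?_⟩
  · simp only [hm, hn]
    subst he hq
    linear_combination (-q) * hbez
  · have h1 : (m + k*e)*t - (n + k*(t+e))*(t+d) = p1 - k * r := by
      rw [hr', hp1, he]; ring
    have h2 : p1 - k * r = L + (p1 - L) % r := by
      rw [hk, Int.emod_def]; ring
    simp only [h1, h2]
    have := Int.emod_nonneg (p1 - L) (ne_of_gt hrpos)
    omega
  · have h1 : (m + k*e)*t - (n + k*(t+e))*(t+d) = p1 - k * r := by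
      rw [hr', hp1, he]; ring
    have h2 : p1 - k * r = L + (p1 - L) % r := by
      rw [hk, Int.emod_def]; ring
    simp only [h1, h2]
    have := Int.emod_lt_of_pos (p1 - L) hrpos
    omega

lemma adiag_lemma (t d : ℤ) (ht : 0 < t) (hd : 0 < d) (hg : Int.gcd (2 * t) d = 2)
    (r : ℤ) (hr : r = t ^ 2 + d * t + d ^ 2 / 2) (s L : ℤ) (hs : 2 ∣ s) :
    ∃ c ∈ (Ctd t d : Set (ℤ × ℤ)), c.2 - c.1 = s ∧ L ≤ c.1 ∧ c.1 ≤ L + r - 1 := by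
  obtain ⟨e, he⟩ : (2:ℤ) ∣ d := by
    have h := (Int.gcd_dvd_right (2*t) d : ((Int.gcd (2*t) d : ℤ)) ∣ d)
    rw [hg] at h; exact_mod_cast h
  have hr' : r = t^2 + 2*e*t + 2*e^2 := by
    rw [hr, he, show (2*e)^2 / 2 = 2*e^2 by
      rw [show (2*e)^2 = 2*(2*e^2) by ring, Int.mul_ediv_cancel_left _ two_ne_zero]]
  have hrpos : 0 < r := by nlinarith
  obtain ⟨q, hq⟩ := hs
  have hbez : (2:ℤ) = 2*t * Int.gcdA (2*t) d + d * Int.gcdB (2*t) d := by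
    rw [← Int.gcd_eq_gcd_ab (2*t) d, hg]; norm_num
  set A := Int.gcdA (2*t) d with hA
  set B := Int.gcdB (2*t) d with hB
  set n : ℤ := q * A with hn
  set m : ℤ := q * B - q * A with hm
  set p1 : ℤ := m*t - n*(t+d) with hp1
  set k : ℤ := -((p1 - L) / r) with hk
  refine ⟨((m + k*(t+e))*t - (n - k*e)*(t+d), (m + k*(t+e))*(t+d) + (n - k*e)*t),
    memC t d _ _, ?_, ?_, ?_⟩
  · simp only [hm, hn]
    subst he hq
    linear_combination (-q) * hbez
  · have h1 : (m + k*(t+e))*t - (n - k*e)*(t+d) = p1 + k * r := by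
      rw [hr', hp1, he]; ring
    have h2 : p1 + k * r = L + (p1 - L) % r := by
      rw [hk, Int.emod_def]; ring
    simp only [h1, h2]
    have := Int.emod_nonneg (p1 - L) (ne_of_gt hrpos)
    omega
  · have h1 : (m + k*(t+e))*t - (n - k*e)*(t+d) = p1 + k * r := by
      rw [hr', hp1, he]; ring
    have h2 : p1 + k * r = L + (p1 - L) % r := by
      rw [hk, Int.emod_def]; ring
    simp only [h1, h2]
    have := Int.emod_lt_of_pos (p1 - L) hrpos
    omega

/-- Let t, d be positive integers with gcd(2t, d) = 2 and let
r = t² + dt + d²/2. Then for every v ∈ ℤ², the ball B_r(v) is r-fixed by C_{t,d};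
that is, C_{t,d} contains at least one point in each of the four sets UR⁻_r(v) ∪ BL⁺_r(v),
UL⁻_r(v) ∪ BR⁺_r(v), BR⁻_r(v) ∪ UL⁺_r(v), and BL⁻_r(v) ∪ UR⁺_r(v). -/
theorem stmt_9 (t d : ℤ) (ht : 0 < t) (hd : 0 < d) (hg : Int.gcd (2 * t) d = 2)
    (r : ℤ) (hr : r = t ^ 2 + d * t + d ^ 2 / 2) (v : ℤ × ℤ) :
    ((Ctd t d : Set (ℤ × ℤ)) ∩ (URm r v ∪ BLp r v)).Nonempty ∧
    ((Ctd t d : Set (ℤ × ℤ)) ∩ (ULm r v ∪ BRp r v)).Nonempty ∧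
    ((Ctd t d : Set (ℤ × ℤ)) ∩ (BRm r v ∪ ULp r v)).Nonempty ∧
    ((Ctd t d : Set (ℤ × ℤ)) ∩ (BLm r v ∪ URp r v)).Nonempty := by
  refine ⟨?_, ?_, ?_, ?_⟩
  · by_cases hp : (2:ℤ) ∣ (v.1 + v.2 + r)
    · obtain ⟨c, hc, hs, hl, hu⟩ := diag_lemma t d ht hd hg r hr (v.1 + v.2 + r) v.1 hp
      refine ⟨c, hc, Or.inl ⟨by omega, by omega, ?_⟩⟩
      rw [abs_of_nonneg (by omega), abs_of_nonneg (by omega)]; omega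
    · obtain ⟨c, hc, hs, hl, hu⟩ := diag_lemma t d ht hd hg r hr (v.1 + v.2 - r - 1)
        (v.1 - r) (by omega)
      refine ⟨c, hc, Or.inr ⟨by omega, by omega, ?_⟩⟩
      rw [abs_of_nonpos (by omega), abs_of_nonpos (by omega)]; omega
  · by_cases hp : (2:ℤ) ∣ (v.2 - v.1 + r)
    · obtain ⟨c, hc, hs, hl, hu⟩ := adiag_lemma t d ht hd hg r hr (v.2 - v.1 + r)
        (v.1 - r) hp
      refine ⟨c, hc, Or.inl ⟨by omega, by omega, ?_⟩⟩
      rw [abs_of_nonpos (by omega), abs_of_nonneg (by omega)]; omega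
    · obtain ⟨c, hc, hs, hl, hu⟩ := adiag_lemma t d ht hd hg r hr (v.2 - v.1 - r - 1)
        (v.1 + 1) (by omega)
      refine ⟨c, hc, Or.inr ⟨by omega, by omega, ?_⟩⟩
      rw [abs_of_nonneg (by omega), abs_of_nonpos (by omega)]; omega
  · by_cases hp : (2:ℤ) ∣ (v.2 - v.1 - r)
    · obtain ⟨c, hc, hs, hl, hu⟩ := adiag_lemma t d ht hd hg r hr (v.2 - v.1 - r) v.1 hp
      refine ⟨c, hc, Or.inl ⟨by omega, by omega, ?_⟩⟩
      rw [abs_of_nonneg (by omega), abs_of_nonpos (by omega)]; omega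
    · obtain ⟨c, hc, hs, hl, hu⟩ := adiag_lemma t d ht hd hg r hr (v.2 - v.1 + r + 1)
        (v.1 - r) (by omega)
      refine ⟨c, hc, Or.inr ⟨by omega, by omega, ?_⟩⟩
      rw [abs_of_nonpos (by omega), abs_of_nonneg (by omega)]; omega
  · by_cases hp : (2:ℤ) ∣ (v.1 + v.2 - r)
    · obtain ⟨c, hc, hs, hl, hu⟩ := diag_lemma t d ht hd hg r hr (v.1 + v.2 - r)
        (v.1 - r) hp
      refine ⟨c, hc, Or.inl ⟨by omega, by omega, ?_⟩⟩
      rw [abs_of_nonpos (by omega), abs_of_nonpos (by omega)]; omega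
    · obtain ⟨c, hc, hs, hl, hu⟩ := diag_lemma t d ht hd hg r hr (v.1 + v.2 + r + 1)
        (v.1 + 1) (by omega)
      refine ⟨c, hc, Or.inr ⟨by omega, by omega, ?_⟩⟩
      rw [abs_of_nonneg (by omega), abs_of_nonneg (by omega)]; omega
end

section
/- Let t, d be positive integers with gcd(2t, d) = 2 and let r = t² + dt + d²/2. Then for every v ∈ ℤ², either C_{t,d} contains a point in each of the four sets UR⁻_r(v), UL⁻_r(v), BR⁻_r(v), BL⁻_r(v), or C_{t,d} contains a point in each of the four sets UR⁺_r(v), UL⁺_r(v), BR⁺_r(v), BL⁺_r(v). -/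
lemma shiftk (r A x : ℤ) (hrpos : 0 < r) :
    ∃ k : ℤ, A ≤ x - r*k ∧ x - r*k ≤ A + r - 1 := by
  refine ⟨(x - A)/r, ?_, ?_⟩ <;>
  · have h1 := Int.mul_ediv_add_emod (x - A) r
    have h2 := Int.emod_nonneg (x - A) (ne_of_gt hrpos)
    have h3 := Int.emod_lt_of_pos (x - A) hrpos
    linarith

lemma key1 (p q r : ℤ) (hpq : IsCoprime p q) (hr : r = p^2 + q^2) (hrpos : 0 < r)
    (S A : ℤ) :
    ∃ a b : ℤ, a*p - b*q = S ∧ A ≤ -(a*q + b*p) ∧ -(a*q + b*p) ≤ A + r - 1 := by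
  obtain ⟨u, w, huw⟩ := hpq
  obtain ⟨k, hk1, hk2⟩ := shiftk r A (-((S*u)*q + (-(S*w))*p)) hrpos
  refine ⟨S*u + q*k, -(S*w) + p*k, ?_, ?_, ?_⟩
  · have h : (S*u + q*k)*p - (-(S*w) + p*k)*q = S*(u*p + w*q) := by ring
    rw [h, huw, mul_one]
  all_goals
    have he : -((S*u + q*k)*q + (-(S*w) + p*k)*p)
        = (-((S*u)*q + (-(S*w))*p)) - r*k := by rw [hr]; ring
    rw [he]
  · exact hk1
  · exact hk2

lemma key2 (p q r : ℤ) (hpq : IsCoprime p q) (hr : r = p^2 + q^2) (hrpos : 0 < r)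
    (D A : ℤ) :
    ∃ a b : ℤ, -(a*q + b*p) = D ∧ A ≤ a*p - b*q ∧ a*p - b*q ≤ A + r - 1 := by
  obtain ⟨u, w, huw⟩ := hpq
  obtain ⟨k, hk1, hk2⟩ := shiftk r A ((-(D*w))*p - (-(D*u))*q) hrpos
  refine ⟨-(D*w) - p*k, -(D*u) + q*k, ?_, ?_, ?_⟩
  · have h : -((-(D*w) - p*k)*q + (-(D*u) + q*k)*p) = D*(u*p + w*q) := by ring
    rw [h, huw, mul_one]
  all_goals
    have he : (-(D*w) - p*k)*p - (-(D*u) + q*k)*q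
        = ((-(D*w))*p - (-(D*u))*q) - r*k := by rw [hr]; ring
    rw [he]
  · exact hk1
  · exact hk2

lemma exists_S (t d e r : ℤ) (hde : d = 2*e) (hcop : IsCoprime (t+e) e)
    (hr : r = (t+e)^2 + e^2) (hrpos : 0 < r) (σ A : ℤ) :
    ∃ δ : ℤ, ((σ + δ, σ - δ) : ℤ × ℤ) ∈ Ctd t d ∧ A ≤ δ ∧ δ ≤ A + r - 1 := by
  obtain ⟨a, b, h1, h2, h3⟩ := key1 (t+e) e r hcop hr hrpos σ A
  refine ⟨-(a*e + b*(t+e)), ?_, h2, h3⟩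
  have he : ((σ + -(a*e + b*(t+e)), σ - -(a*e + b*(t+e))) : ℤ × ℤ)
      = ((a*t - b*(t+d), a*(t+d) + b*t) : ℤ × ℤ) := by
    rw [← h1]; subst hde; simp [Prod.ext_iff]; constructor <;> ring
  rw [he]; exact mem_Ctd t d a b

lemma exists_D (t d e r : ℤ) (hde : d = 2*e) (hcop : IsCoprime (t+e) e)
    (hr : r = (t+e)^2 + e^2) (hrpos : 0 < r) (δ A : ℤ) :
    ∃ σ : ℤ, ((σ + δ, σ - δ) : ℤ × ℤ) ∈ Ctd t d ∧ A ≤ σ ∧ σ ≤ A + r - 1 := by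
  obtain ⟨a, b, h1, h2, h3⟩ := key2 (t+e) e r hcop hr hrpos δ A
  refine ⟨a*(t+e) - b*e, ?_, h2, h3⟩
  have he : ((a*(t+e) - b*e + δ, a*(t+e) - b*e - δ) : ℤ × ℤ)
      = ((a*t - b*(t+d), a*(t+d) + b*t) : ℤ × ℤ) := by
    rw [← h1]; subst hde; simp [Prod.ext_iff]; constructor <;> ring
  rw [he]; exact mem_Ctd t d a b

theorem stmt_10 (t d : ℤ) (ht : 0 < t) (hd : 0 < d) (hg : Int.gcd (2 * t) d = 2)
    (r : ℤ) (hr : r = t ^ 2 + d * t + d ^ 2 / 2) (v : ℤ × ℤ) :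
    (((Ctd t d : Set (ℤ × ℤ)) ∩ URm r v).Nonempty ∧
     ((Ctd t d : Set (ℤ × ℤ)) ∩ ULm r v).Nonempty ∧
     ((Ctd t d : Set (ℤ × ℤ)) ∩ BRm r v).Nonempty ∧
     ((Ctd t d : Set (ℤ × ℤ)) ∩ BLm r v).Nonempty) ∨
    (((Ctd t d : Set (ℤ × ℤ)) ∩ URp r v).Nonempty ∧
     ((Ctd t d : Set (ℤ × ℤ)) ∩ ULp r v).Nonempty ∧
     ((Ctd t d : Set (ℤ × ℤ)) ∩ BRp r v).Nonempty ∧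
     ((Ctd t d : Set (ℤ × ℤ)) ∩ BLp r v).Nonempty) := by
  obtain ⟨e, hde⟩ : (2:ℤ) ∣ d := by
    have h : ((Int.gcd (2*t) d : ℕ) : ℤ) ∣ d := Int.gcd_dvd_right _ _
    rw [hg] at h; exact_mod_cast h
  have he : 0 < e := by omega
  have hcte : IsCoprime t e := by
    rw [Int.isCoprime_iff_gcd_eq_one]
    have h2 : Int.gcd (2*t) (2*e) = 2 * Int.gcd t e := by
      rw [Int.gcd_mul_left]; norm_num
    rw [hde] at hg; omega
  have hcop : IsCoprime (t+e) e := by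
    have := hcte.add_mul_left_left 1
    simpa using this
  have hr' : r = (t+e)^2 + e^2 := by
    have h4 : d^2 / 2 = 2*e^2 := by
      rw [hde, show (2*e)^2 = 2*(2*e^2) by ring, Int.mul_ediv_cancel_left _ (by norm_num)]
    rw [hr, h4, hde]; ring
  have hrpos : 0 < r := by nlinarith
  -- abbreviations
  have hES := exists_S t d e r hde hcop hr' hrpos
  have hED := exists_D t d e r hde hcop hr' hrpos
  rcases Int.even_or_odd (r + v.1 + v.2) with hpar | hpar
  · -- minus case
    obtain ⟨c, hc⟩ := hpar
    left
    refine ⟨?_, ?_, ?_, ?_⟩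
    · -- URm : 2σ = r + v.1 + v.2, δ ∈ [v.1 - σ, v.1 - σ + r - 1]
      obtain ⟨δ, hmem, h1, h2⟩ := hES c (v.1 - c)
      refine ⟨(c + δ, c - δ), hmem, ?_, ?_, ?_⟩ <;>
        simp only [URm, Set.mem_setOf_eq]
      · omega
      · omega
      · rw [abs_of_nonneg (by omega), abs_of_nonneg (by omega)]; omega
    · -- ULm : 2δ = (v.1 - v.2) - r ; σ ∈ [v.1 - δ - r + 1, v.1 - δ]
      obtain ⟨δ0, hδ0⟩ : ∃ z : ℤ, 2*z = (v.1 - v.2) - r := ⟨(v.1 - v.2 - r)/2, by omega⟩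
      obtain ⟨σ, hmem, h1, h2⟩ := hED δ0 (v.1 - δ0 - r + 1)
      refine ⟨(σ + δ0, σ - δ0), hmem, ?_, ?_, ?_⟩ <;>
        simp only [ULm, Set.mem_setOf_eq]
      · omega
      · omega
      · rw [abs_of_nonpos (by omega), abs_of_nonneg (by omega)]; omega
    · -- BRm : 2δ = (v.1 - v.2) + r ; σ ∈ [v.1 - δ, v.1 - δ + r - 1]
      obtain ⟨δ0, hδ0⟩ : ∃ z : ℤ, 2*z = (v.1 - v.2) + r := ⟨(v.1 - v.2 + r)/2, by omega⟩
      obtain ⟨σ, hmem, h1, h2⟩ := hED δ0 (v.1 - δ0)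
      refine ⟨(σ + δ0, σ - δ0), hmem, ?_, ?_, ?_⟩ <;>
        simp only [BRm, Set.mem_setOf_eq]
      · omega
      · omega
      · rw [abs_of_nonneg (by omega), abs_of_nonpos (by omega)]; omega
    · -- BLm : 2σ = v.1 + v.2 - r ; δ ∈ [v.1 - σ - r + 1, v.1 - σ]
      obtain ⟨σ0, hσ0⟩ : ∃ z : ℤ, 2*z = v.1 + v.2 - r := ⟨(v.1 + v.2 - r)/2, by omega⟩
      obtain ⟨δ, hmem, h1, h2⟩ := hES σ0 (v.1 - σ0 - r + 1)
      refine ⟨(σ0 + δ, σ0 - δ), hmem, ?_, ?_, ?_⟩ <;>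
        simp only [BLm, Set.mem_setOf_eq]
      · omega
      · omega
      · rw [abs_of_nonpos (by omega), abs_of_nonpos (by omega)]; omega
  · -- plus case
    obtain ⟨c, hc⟩ := hpar
    right
    refine ⟨?_, ?_, ?_, ?_⟩
    · -- URp : 2σ = r + 1 + v.1 + v.2 ; δ ∈ [v.1 - σ + 1, v.1 - σ + r]
      obtain ⟨σ0, hσ0⟩ : ∃ z : ℤ, 2*z = r + 1 + v.1 + v.2 := ⟨(r + 1 + v.1 + v.2)/2, by omega⟩
      obtain ⟨δ, hmem, h1, h2⟩ := hES σ0 (v.1 - σ0 + 1)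
      refine ⟨(σ0 + δ, σ0 - δ), hmem, ?_, ?_, ?_⟩ <;>
        simp only [URp, Set.mem_setOf_eq]
      · omega
      · omega
      · rw [abs_of_nonneg (by omega), abs_of_nonneg (by omega)]; omega
    · -- ULp : 2δ = (v.1 - v.2) - r - 1 ; σ ∈ [v.1 - δ - r, v.1 - δ - 1]
      obtain ⟨δ0, hδ0⟩ : ∃ z : ℤ, 2*z = (v.1 - v.2) - r - 1 := ⟨(v.1 - v.2 - r - 1)/2, by omega⟩
      obtain ⟨σ, hmem, h1, h2⟩ := hED δ0 (v.1 - δ0 - r)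
      refine ⟨(σ + δ0, σ - δ0), hmem, ?_, ?_, ?_⟩ <;>
        simp only [ULp, Set.mem_setOf_eq]
      · omega
      · omega
      · rw [abs_of_nonpos (by omega), abs_of_nonneg (by omega)]; omega
    · -- BRp : 2δ = (v.1 - v.2) + r + 1 ; σ ∈ [v.1 - δ + 1, v.1 - δ + r]
      obtain ⟨δ0, hδ0⟩ : ∃ z : ℤ, 2*z = (v.1 - v.2) + r + 1 := ⟨(v.1 - v.2 + r + 1)/2, by omega⟩
      obtain ⟨σ, hmem, h1, h2⟩ := hED δ0 (v.1 - δ0 + 1)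
      refine ⟨(σ + δ0, σ - δ0), hmem, ?_, ?_, ?_⟩ <;>
        simp only [BRp, Set.mem_setOf_eq]
      · omega
      · omega
      · rw [abs_of_nonneg (by omega), abs_of_nonpos (by omega)]; omega
    · -- BLp : 2σ = v.1 + v.2 - r - 1 ; δ ∈ [v.1 - σ - r, v.1 - σ - 1]
      obtain ⟨σ0, hσ0⟩ : ∃ z : ℤ, 2*z = v.1 + v.2 - r - 1 := ⟨(v.1 + v.2 - r - 1)/2, by omega⟩
      obtain ⟨δ, hmem, h1, h2⟩ := hES σ0 (v.1 - σ0 - r)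
      refine ⟨(σ0 + δ, σ0 - δ), hmem, ?_, ?_, ?_⟩ <;>
        simp only [BLp, Set.mem_setOf_eq]
      · omega
      · omega
      · rw [abs_of_nonpos (by omega), abs_of_nonpos (by omega)]; omega
end

section
/- Let t, d be positive integers with gcd(2t, d) = 2 and let r = t² + dt + d²/2. Then C_{t,d} is an r-identifying code in the grid graph ℤ². -/
/-- window: interval of r consecutive ints y with 2y in [V-r, V+r] -/
lemma window (r V : ℤ) (hr : 0 < r) :
    ∃ n : ℤ, ∀ y, n ≤ y → y < n + r → V - r ≤ 2*y ∧ 2*y ≤ V + r := by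
  rcases Int.even_or_odd (V - r) with ⟨k, hk⟩ | ⟨k, hk⟩
  · exact ⟨k, fun y h1 h2 => by omega⟩
  · exact ⟨k+1, fun y h1 h2 => by omega⟩

lemma keylemma (r A B : ℤ) (hr : 0 < r) (hAB : A < B) :
    ∃ x : ℤ, (A - r ≤ 2*x ∧ 2*x ≤ A + r ∧ 2*x < B - r) ∨
             (B - r ≤ 2*x ∧ 2*x ≤ B + r ∧ A + r < 2*x) := by
  rcases Int.even_or_odd (A - r) with ⟨k, hk⟩ | ⟨k, hk⟩
  · exact ⟨k, Or.inl (by omega)⟩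
  · rcases lt_or_ge (A+1) B with h | h
    · exact ⟨k+1, Or.inl (by omega)⟩
    · exact ⟨k+1+r, Or.inr (by omega)⟩

lemma solve (r g c n : ℤ) (hr : 0 < r) (hco : IsCoprime g r) :
    ∃ x, n ≤ x ∧ x < n + r ∧ r ∣ g*x - c := by
  obtain ⟨u, v, huv⟩ := hco
  have hkey := Int.mul_ediv_add_emod (u*c - n) r
  have hnn := Int.emod_nonneg (u*c - n) (ne_of_gt hr)
  have hlt := Int.emod_lt_of_pos (u*c - n) hr
  refine ⟨n + (u*c - n) % r, by omega, by omega, ⟨-(v*c) - g*((u*c - n)/r), ?_⟩⟩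
  linear_combination g * hkey + c * huv

lemma dist1_le (p q x y r : ℤ) (h1 : (p+q) - r ≤ 2*x) (h2 : 2*x ≤ (p+q) + r)
    (h3 : (p-q) - r ≤ 2*y) (h4 : 2*y ≤ (p-q) + r) :
    dist1 (p, q) (x+y, x-y) ≤ r := by
  show |p - (x+y)| + |q - (x-y)| ≤ r
  rcases abs_cases (p - (x+y)) with ⟨h5,h6⟩|⟨h5,h6⟩ <;>
    rcases abs_cases (q - (x-y)) with ⟨h7,h8⟩|⟨h7,h8⟩ <;> omega

lemma dist1_not_le (p q x y r : ℤ)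
    (h : 2*x < (p+q) - r ∨ (p+q) + r < 2*x ∨ 2*y < (p-q) - r ∨ (p-q) + r < 2*y) :
    ¬ dist1 (p, q) (x+y, x-y) ≤ r := by
  show ¬ |p - (x+y)| + |q - (x-y)| ≤ r
  rw [not_le]
  rcases abs_cases (p - (x+y)) with ⟨h5,h6⟩|⟨h5,h6⟩ <;>
    rcases abs_cases (q - (x-y)) with ⟨h7,h8⟩|⟨h7,h8⟩ <;> omega

lemma mem_Ctd_of (t e x y : ℤ) (hr0 : ((t+e)^2+e^2) ≠ 0) (hco : IsCoprime (t+e) e)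
    (hdvd : ((t+e)^2+e^2) ∣ ((t+e)*x - e*y)) : (x + y, x - y) ∈ Ctd t (2*e) := by
  obtain ⟨m, hm⟩ := hdvd
  obtain ⟨u, v, huv⟩ := hco
  have hA : ((t+e)^2+e^2) ∣ (t+e)*(e*x + (t+e)*y) := ⟨e*m + y, by linear_combination e*hm⟩
  have hB : ((t+e)^2+e^2) ∣ e*(e*x + (t+e)*y) := ⟨x - (t+e)*m, by linear_combination (-(t+e))*hm⟩
  have h2 : ((t+e)^2+e^2) ∣ e*x + (t+e)*y := by
    have := dvd_add (hA.mul_left u) (hB.mul_left v)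
    rwa [show u*((t+e)*(e*x+(t+e)*y)) + v*(e*(e*x+(t+e)*y))
        = (u*(t+e)+v*e) * (e*x + (t+e)*y) from by ring, huv, one_mul] at this
  obtain ⟨k, hk⟩ := h2
  have hx : x = m*(t+e) + k*e :=
    mul_left_cancel₀ hr0 (by linear_combination (t+e)*hm + e*hk)
  have hy : y = -(m*e) + k*(t+e) :=
    mul_left_cancel₀ hr0 (by linear_combination (-e)*hm + (t+e)*hk)
  have hrw : ((x+y, x-y) : ℤ×ℤ) = m • ((t, t+2*e) : ℤ×ℤ) + (-k) • ((-(t+2*e), t) : ℤ×ℤ) := by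
    have h1 : m • ((t, t+2*e) : ℤ×ℤ) = (m * t, m * (t+2*e)) := rfl
    have h2 : (-k) • ((-(t+2*e), t) : ℤ×ℤ) = ((-k) * (-(t+2*e)), (-k) * t) := rfl
    rw [h1, h2, Prod.mk_add_mk, Prod.mk.injEq]
    constructor
    · linear_combination hx + hy
    · linear_combination hx - hy
  rw [hrw]
  have hg1 : ((t, t+2*e) : ℤ×ℤ) ∈ Ctd t (2*e) :=
    AddSubgroup.subset_closure (Set.mem_insert _ _)
  have hg2 : ((-(t+2*e), t) : ℤ×ℤ) ∈ Ctd t (2*e) :=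
    AddSubgroup.subset_closure (Set.mem_insert_of_mem _ (Set.mem_singleton _))
  exact AddSubgroup.add_mem _ (AddSubgroup.zsmul_mem _ hg1 m) (AddSubgroup.zsmul_mem _ hg2 (-k))

/-- Let t, d be positive integers with gcd(2t, d) = 2 and let
r = t² + dt + d²/2. Then C_{t,d} is an r-identifying code in the grid graph ℤ². -/
theorem stmt_11 (t d : ℤ) (ht : 0 < t) (hd : 0 < d) (hg : Int.gcd (2 * t) d = 2)
    (r : ℤ) (hr : r = t ^ 2 + d * t + d ^ 2 / 2) :
    IsIdentifying (Ctd t d) r := by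
  have h2d : (2:ℤ) ∣ d := by
    have h := Int.gcd_dvd_right (a := 2*t) (b := d)
    rw [hg] at h; exact_mod_cast h
  obtain ⟨e, he⟩ := h2d; subst he
  have he1 : 1 ≤ e := by omega
  have hte : IsCoprime t e := by
    rw [Int.isCoprime_iff_gcd_eq_one]
    have h := Int.gcd_mul_left 2 t e
    rw [hg] at h
    have h2 : (2:ℤ).natAbs = 2 := rfl
    rw [h2] at h
    omega
  have hae : IsCoprime (t+e) e := by
    have := hte.add_mul_left_left 1; simpa using this
  have hrre : r = (t+e)^2 + e^2 := by
    have h4 : ((2*e)^2 : ℤ) / 2 = 2 * e^2 := by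
      rw [show ((2*e)^2 : ℤ) = 2 * (2 * e^2) from by ring,
        Int.mul_ediv_cancel_left _ two_ne_zero]
    rw [hr, h4]; ring
  have hr0 : 0 < r := by nlinarith [sq_nonneg (t+e)]
  have hrne : ((t+e)^2 + e^2 : ℤ) ≠ 0 := by rw [← hrre]; exact ne_of_gt hr0
  have har : IsCoprime (t+e) r := by
    have h1 : IsCoprime (t+e) (e^2) := hae.pow_right
    have h2 := h1.add_mul_left_right (t+e)
    rwa [show (e^2 + (t+e)*(t+e) : ℤ) = (t+e)^2 + e^2 from by ring, ← hrre] at h2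
  have her : IsCoprime e r := by
    have h1 : IsCoprime e ((t+e)^2) := hae.symm.pow_right
    have h2 := h1.add_mul_left_right e
    rwa [show ((t+e)^2 + e*e : ℤ) = (t+e)^2 + e^2 from by ring, ← hrre] at h2
  have memC : ∀ x y : ℤ, r ∣ ((t+e)*x - e*y) → (x + y, x - y) ∈ Ctd t (2*e) := by
    intro x y hdvd
    exact mem_Ctd_of t e x y hrne hae (by rw [← hrre]; exact hdvd)
  constructor
  · -- covering
    rintro ⟨p, q⟩
    have hy : ∃ y : ℤ, (p-q) - r ≤ 2*y ∧ 2*y ≤ (p-q) + r := by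
      rcases Int.even_or_odd (p - q) with ⟨k, hk⟩ | ⟨k, hk⟩
      · exact ⟨k, by omega⟩
      · exact ⟨k, by omega⟩
    obtain ⟨y, hy1, hy2⟩ := hy
    obtain ⟨n, hn⟩ := window r (p+q) hr0
    obtain ⟨x, hx1, hx2, hx3⟩ := solve r (t+e) (e*y) n hr0 har
    obtain ⟨hb1, hb2⟩ := hn x hx1 hx2
    exact ⟨(x+y, x-y), memC x y hx3, dist1_le p q x y r hb1 hb2 hy1 hy2⟩
  · -- separation
    rintro ⟨p₁, q₁⟩ ⟨p₂, q₂⟩ hvw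
    have hsep : ∀ c : ℤ×ℤ, c ∈ Ctd t (2*e) → dist1 (p₁,q₁) c ≤ r → ¬ dist1 (p₂,q₂) c ≤ r →
        Kset (Ctd t (2*e)) r (p₁,q₁) ≠ Kset (Ctd t (2*e)) r (p₂,q₂) := by
      intro c hc h1 h2 heq
      have h3 : c ∈ Kset (Ctd t (2*e)) r (p₁,q₁) := ⟨hc, h1⟩
      rw [heq] at h3
      exact h2 h3.2
    have hsep' : ∀ c : ℤ×ℤ, c ∈ Ctd t (2*e) → dist1 (p₂,q₂) c ≤ r → ¬ dist1 (p₁,q₁) c ≤ r →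
        Kset (Ctd t (2*e)) r (p₁,q₁) ≠ Kset (Ctd t (2*e)) r (p₂,q₂) := by
      intro c hc h1 h2 heq
      have h3 : c ∈ Kset (Ctd t (2*e)) r (p₂,q₂) := ⟨hc, h1⟩
      rw [← heq] at h3
      exact h2 h3.2
    by_cases hU : p₁ + q₁ = p₂ + q₂
    · have hV : p₁ - q₁ ≠ p₂ - q₂ := by
        intro h; exact hvw (by rw [Prod.mk.injEq]; omega)
      rcases hV.lt_or_gt with h | h
      · obtain ⟨yy, hyy⟩ := keylemma r (p₁-q₁) (p₂-q₂) hr0 h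
        rcases hyy with ⟨k1,k2,k3⟩ | ⟨k1,k2,k3⟩
        · obtain ⟨n, hn⟩ := window r (p₁+q₁) hr0
          obtain ⟨x, hx1, hx2, hx3⟩ := solve r (t+e) (e*yy) n hr0 har
          obtain ⟨hb1, hb2⟩ := hn x hx1 hx2
          exact hsep (x+yy, x-yy) (memC x yy hx3)
            (dist1_le p₁ q₁ x yy r hb1 hb2 k1 k2)
            (dist1_not_le p₂ q₂ x yy r (by omega))
        · obtain ⟨n, hn⟩ := window r (p₂+q₂) hr0
          obtain ⟨x, hx1, hx2, hx3⟩ := solve r (t+e) (e*yy) n hr0 har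
          obtain ⟨hb1, hb2⟩ := hn x hx1 hx2
          exact hsep' (x+yy, x-yy) (memC x yy hx3)
            (dist1_le p₂ q₂ x yy r hb1 hb2 k1 k2)
            (dist1_not_le p₁ q₁ x yy r (by omega))
      · obtain ⟨yy, hyy⟩ := keylemma r (p₂-q₂) (p₁-q₁) hr0 h
        rcases hyy with ⟨k1,k2,k3⟩ | ⟨k1,k2,k3⟩
        · obtain ⟨n, hn⟩ := window r (p₂+q₂) hr0
          obtain ⟨x, hx1, hx2, hx3⟩ := solve r (t+e) (e*yy) n hr0 har
          obtain ⟨hb1, hb2⟩ := hn x hx1 hx2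
          exact hsep' (x+yy, x-yy) (memC x yy hx3)
            (dist1_le p₂ q₂ x yy r hb1 hb2 k1 k2)
            (dist1_not_le p₁ q₁ x yy r (by omega))
        · obtain ⟨n, hn⟩ := window r (p₁+q₁) hr0
          obtain ⟨x, hx1, hx2, hx3⟩ := solve r (t+e) (e*yy) n hr0 har
          obtain ⟨hb1, hb2⟩ := hn x hx1 hx2
          exact hsep (x+yy, x-yy) (memC x yy hx3)
            (dist1_le p₁ q₁ x yy r hb1 hb2 k1 k2)
            (dist1_not_le p₂ q₂ x yy r (by omega))
    · rcases (Ne.lt_or_gt hU) with h | h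
      · obtain ⟨xx, hxx⟩ := keylemma r (p₁+q₁) (p₂+q₂) hr0 h
        rcases hxx with ⟨k1,k2,k3⟩ | ⟨k1,k2,k3⟩
        · obtain ⟨n, hn⟩ := window r (p₁-q₁) hr0
          obtain ⟨y, hy1, hy2, hy3⟩ := solve r e ((t+e)*xx) n hr0 her
          obtain ⟨hb1, hb2⟩ := hn y hy1 hy2
          have hx3 : r ∣ (t+e)*xx - e*y := by
            obtain ⟨m, hm⟩ := hy3; exact ⟨-m, by linarith⟩
          exact hsep (xx+y, xx-y) (memC xx y hx3)
            (dist1_le p₁ q₁ xx y r k1 k2 hb1 hb2)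
            (dist1_not_le p₂ q₂ xx y r (by omega))
        · obtain ⟨n, hn⟩ := window r (p₂-q₂) hr0
          obtain ⟨y, hy1, hy2, hy3⟩ := solve r e ((t+e)*xx) n hr0 her
          obtain ⟨hb1, hb2⟩ := hn y hy1 hy2
          have hx3 : r ∣ (t+e)*xx - e*y := by
            obtain ⟨m, hm⟩ := hy3; exact ⟨-m, by linarith⟩
          exact hsep' (xx+y, xx-y) (memC xx y hx3)
            (dist1_le p₂ q₂ xx y r k1 k2 hb1 hb2)
            (dist1_not_le p₁ q₁ xx y r (by omega))
      · obtain ⟨xx, hxx⟩ := keylemma r (p₂+q₂) (p₁+q₁) hr0 h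
        rcases hxx with ⟨k1,k2,k3⟩ | ⟨k1,k2,k3⟩
        · obtain ⟨n, hn⟩ := window r (p₂-q₂) hr0
          obtain ⟨y, hy1, hy2, hy3⟩ := solve r e ((t+e)*xx) n hr0 her
          obtain ⟨hb1, hb2⟩ := hn y hy1 hy2
          have hx3 : r ∣ (t+e)*xx - e*y := by
            obtain ⟨m, hm⟩ := hy3; exact ⟨-m, by linarith⟩
          exact hsep' (xx+y, xx-y) (memC xx y hx3)
            (dist1_le p₂ q₂ xx y r k1 k2 hb1 hb2)
            (dist1_not_le p₁ q₁ xx y r (by omega))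
        · obtain ⟨n, hn⟩ := window r (p₁-q₁) hr0
          obtain ⟨y, hy1, hy2, hy3⟩ := solve r e ((t+e)*xx) n hr0 her
          obtain ⟨hb1, hb2⟩ := hn y hy1 hy2
          have hx3 : r ∣ (t+e)*xx - e*y := by
            obtain ⟨m, hm⟩ := hy3; exact ⟨-m, by linarith⟩
          exact hsep (xx+y, xx-y) (memC xx y hx3)
            (dist1_le p₁ q₁ xx y r k1 k2 hb1 hb2)
            (dist1_not_le p₂ q₂ xx y r (by omega))
end

section
/- Let C be a subgroup of ℤ² and suppose there exists (x, y) ∈ ℤ² such that C contains no point of any of the four sets ℓ₁ = {(x+k, y+k) : k ∈ ℤ}, ℓ₂ = {(x+k, y−k) : k ∈ ℤ}, ℓ₃ = {(x+k, y+k+1) : k ∈ ℤ}, and ℓ₄ = {(x+k, y−k+1) : k ∈ ℤ}. Then for every integer r ≥ 0, C is not an r-identifying code in the grid graph ℤ². -/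
lemma abs2_le {a b r : ℤ} : |a| + |b| ≤ r ↔ (a + b ≤ r ∧ -(a+b) ≤ r ∧ a - b ≤ r ∧ b - a ≤ r) := by
  rcases abs_cases a with ⟨h1, ha⟩|⟨h1, ha⟩ <;> rcases abs_cases b with ⟨h2, hb⟩|⟨h2, hb⟩ <;>
    rw [h1, h2] <;> omega

lemma pick (m r t : ℤ) (hm : 3 ≤ |m|) :
    ∃ σ : ℤ, σ % 2 = t % 2 ∧ ¬ m ∣ (σ - r) ∧ ¬ m ∣ (σ + r + 1) := by
  have hdvd2 : ¬ m ∣ 2 := by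
    intro h
    have := Int.le_of_dvd (by norm_num) ((abs_dvd m 2).mpr h)
    linarith
  have hm4 : m ∣ 4 → m = 4 ∨ m = -4 := by
    intro h
    have h2 : |m| ≤ 4 := Int.le_of_dvd (by norm_num) ((abs_dvd _ _).mpr h)
    have hb : (-4 ≤ m ∧ m ≤ 4) ∧ (m ≤ -3 ∨ 3 ≤ m) := by
      rcases abs_cases m with ⟨e, he⟩|⟨e, he⟩ <;> rw [e] at h2 hm <;> omega
    obtain ⟨⟨hb1, hb2⟩, hb3⟩ := hb
    interval_cases m <;> first | (left; rfl) | (right; rfl) | (exact absurd h (by decide)) | omega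
  have h4odd : ∀ c : ℤ, m ∣ 4 → m ∣ c → c % 2 = 1 → False := by
    intro c h4 hcv hodd
    rcases hm4 h4 with e|e <;> (subst e; obtain ⟨k, hk⟩ := hcv; omega)
  by_contra hc
  push_neg at hc
  have H : ∀ σ : ℤ, σ % 2 = t % 2 → m ∣ (σ - r) ∨ m ∣ (σ + r + 1) := by
    intro σ hσ
    by_cases hA : m ∣ (σ - r)
    · exact Or.inl hA
    · exact Or.inr (hc σ hσ hA)
  have h0 := H t rfl
  have h2 := H (t+2) (by omega)
  have h4 := H (t+4) (by omega)
  have dtwo : ∀ a b : ℤ, m ∣ a → m ∣ b → b - a = 2 → False := by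
    intro a b hA hB e
    exact hdvd2 (e ▸ dvd_sub hB hA)
  rcases h0 with a0|b0 <;> rcases h2 with a2|b2 <;> rcases h4 with a4|b4
  · exact dtwo _ _ a0 a2 (by ring)
  · exact dtwo _ _ a0 a2 (by ring)
  · -- a0, b2, a4
    have hf : m ∣ 4 := by
      have h := dvd_sub a4 a0
      rw [show (t + 4 - r) - (t - r) = 4 from by ring] at h
      exact h
    have hcv : m ∣ 2*r + 3 := by
      have h := dvd_sub b2 a0
      rw [show (t + 2 + r + 1) - (t - r) = 2*r + 3 from by ring] at h
      exact h
    exact h4odd _ hf hcv (by omega)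
  · exact dtwo _ _ b2 b4 (by ring)
  · exact dtwo _ _ a2 a4 (by ring)
  · -- b0, a2, b4
    have hf : m ∣ 4 := by
      have h := dvd_sub b4 b0
      rw [show (t + 4 + r + 1) - (t + r + 1) = 4 from by ring] at h
      exact h
    have hcv : m ∣ 1 - 2*r := by
      have h := dvd_sub a2 b0
      rw [show (t + 2 - r) - (t + r + 1) = 1 - 2*r from by ring] at h
      exact h
    exact h4odd _ hf hcv (by omega)
  · exact dtwo _ _ b0 b2 (by ring)
  · exact dtwo _ _ b0 b2 (by ring)

lemma notsmall (k A : ℤ) (hA : ¬ k ∣ A) (hB : ¬ k ∣ (A + 1)) : k = 0 ∨ 3 ≤ |k| := by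
  by_contra hcon
  push_neg at hcon
  obtain ⟨hk0, hk3⟩ := hcon
  have hk : k = 1 ∨ k = -1 ∨ k = 2 ∨ k = -2 := by
    rcases abs_cases k with ⟨e, he⟩|⟨e, he⟩ <;> omega
  rcases hk with e|e|e|e <;> subst e
  · exact hA ⟨A, (one_mul A).symm⟩
  · exact hA ⟨-A, by ring⟩
  · rcases Int.even_or_odd A with ⟨j, hj⟩|⟨j, hj⟩
    · exact hA ⟨j, by omega⟩
    · exact hB ⟨j+1, by omega⟩
  · rcases Int.even_or_odd A with ⟨j, hj⟩|⟨j, hj⟩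
    · exact hA ⟨-j, by omega⟩
    · exact hB ⟨-(j+1), by omega⟩

/-- Let C be a subgroup of ℤ² and suppose there exists (x, y) ∈ ℤ² such that
C contains no point of any of the four sets ℓ₁ = {(x+k, y+k)}, ℓ₂ = {(x+k, y−k)},
ℓ₃ = {(x+k, y+k+1)}, ℓ₄ = {(x+k, y−k+1)} (k ∈ ℤ). Then for every integer r ≥ 0, C is not
an r-identifying code in the grid graph ℤ². -/
theorem stmt_12 (C : AddSubgroup (ℤ × ℤ))
    (h : ∃ x y : ℤ,
      (∀ k : ℤ, (x + k, y + k) ∉ C) ∧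
      (∀ k : ℤ, (x + k, y - k) ∉ C) ∧
      (∀ k : ℤ, (x + k, y + k + 1) ∉ C) ∧
      (∀ k : ℤ, (x + k, y - k + 1) ∉ C)) :
    ∀ r : ℤ, 0 ≤ r → ¬ IsIdentifying (C : Set (ℤ × ℤ)) r := by
  obtain ⟨x, y, h1, h2, h3, h4⟩ := h
  intro r hr hid
  set f : ℤ × ℤ →+ ℤ := (AddMonoidHom.fst ℤ ℤ) + (AddMonoidHom.snd ℤ ℤ) with hf
  set g : ℤ × ℤ →+ ℤ := (AddMonoidHom.fst ℤ ℤ) - (AddMonoidHom.snd ℤ ℤ) with hg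
  obtain ⟨m, hmEq⟩ := Int.subgroup_cyclic (AddSubgroup.map f C)
  obtain ⟨n, hnEq⟩ := Int.subgroup_cyclic (AddSubgroup.map g C)
  have hSm : ∀ c : ℤ × ℤ, c ∈ C → m ∣ c.1 + c.2 := by
    intro c hc
    have hmem : c.1 + c.2 ∈ AddSubgroup.map f C := ⟨c, hc, rfl⟩
    rw [hmEq, ← AddSubgroup.zmultiples_eq_closure] at hmem
    exact Int.mem_zmultiples_iff.mp hmem
  have hSn : ∀ c : ℤ × ℤ, c ∈ C → n ∣ c.1 - c.2 := by
    intro c hc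
    have hmem : c.1 - c.2 ∈ AddSubgroup.map g C := ⟨c, hc, rfl⟩
    rw [hnEq, ← AddSubgroup.zmultiples_eq_closure] at hmem
    exact Int.mem_zmultiples_iff.mp hmem
  have hmX : ∀ X : ℤ, m ∣ X → ∃ c : ℤ × ℤ, c ∈ C ∧ c.1 + c.2 = X := by
    intro X hX
    have hmem : X ∈ AddSubgroup.map f C := by
      rw [hmEq, ← AddSubgroup.zmultiples_eq_closure]
      exact Int.mem_zmultiples_iff.mpr hX
    obtain ⟨c, hc, he⟩ := hmem
    exact ⟨c, hc, he⟩
  have hnX : ∀ X : ℤ, n ∣ X → ∃ c : ℤ × ℤ, c ∈ C ∧ c.1 - c.2 = X := by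
    intro X hX
    have hmem : X ∈ AddSubgroup.map g C := by
      rw [hnEq, ← AddSubgroup.zmultiples_eq_closure]
      exact Int.mem_zmultiples_iff.mpr hX
    obtain ⟨c, hc, he⟩ := hmem
    exact ⟨c, hc, he⟩
  have hmA : ¬ m ∣ (x + y) := by
    intro hd
    obtain ⟨c, hc, he⟩ := hmX _ hd
    refine h2 (c.1 - x) ?_
    have hcc : (x + (c.1 - x), y - (c.1 - x)) = c := by
      obtain ⟨c1, c2⟩ := c
      simp only [Prod.mk.injEq]
      simp only at he
      omega
    rw [hcc]; exact hc
  have hmB : ¬ m ∣ (x + y + 1) := by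
    intro hd
    obtain ⟨c, hc, he⟩ := hmX _ hd
    refine h4 (c.1 - x) ?_
    have hcc : (x + (c.1 - x), y - (c.1 - x) + 1) = c := by
      obtain ⟨c1, c2⟩ := c
      simp only [Prod.mk.injEq]
      simp only at he
      omega
    rw [hcc]; exact hc
  have hnA : ¬ n ∣ (x - y) := by
    intro hd
    obtain ⟨c, hc, he⟩ := hnX _ hd
    refine h1 (c.1 - x) ?_
    have hcc : (x + (c.1 - x), y + (c.1 - x)) = c := by
      obtain ⟨c1, c2⟩ := c
      simp only [Prod.mk.injEq]
      simp only at he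
      omega
    rw [hcc]; exact hc
  have hnB : ¬ n ∣ (x - y - 1) := by
    intro hd
    obtain ⟨c, hc, he⟩ := hnX _ hd
    refine h3 (c.1 - x) ?_
    have hcc : (x + (c.1 - x), y + (c.1 - x) + 1) = c := by
      obtain ⟨c1, c2⟩ := c
      simp only [Prod.mk.injEq]
      simp only at he
      omega
    rw [hcc]; exact hc
  have hnB' : ¬ n ∣ ((x - y - 1) + 1) := by
    intro hd
    exact hnA (by rwa [show x - y - 1 + 1 = x - y from by ring] at hd)
  rcases notsmall m (x + y) hmA hmB with hm0 | hm3
  · -- m = 0 : some Kset is empty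
    subst hm0
    obtain ⟨c, hcC, hcB⟩ := hid.1 (r + 1, 0)
    have hs : c.1 + c.2 = 0 := zero_dvd_iff.mp (hSm c hcC)
    simp only [ball1, Set.mem_setOf_eq, dist1] at hcB
    rw [abs2_le] at hcB
    omega
  rcases notsmall n (x - y - 1) hnB hnB' with hn0 | hn3
  · -- n = 0 : some Kset is empty
    subst hn0
    obtain ⟨c, hcC, hcB⟩ := hid.1 (r + 1, 0)
    have hs : c.1 - c.2 = 0 := zero_dvd_iff.mp (hSn c hcC)
    simp only [ball1, Set.mem_setOf_eq, dist1] at hcB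
    rw [abs2_le] at hcB
    omega
  · -- main case
    obtain ⟨σ, hσp, hσ1, hσ2⟩ := pick m r 0 hm3
    obtain ⟨δ, hδp, hδ1, hδ2⟩ := pick n r σ hn3
    obtain ⟨p, q, hpq, hpq2⟩ : ∃ p q : ℤ, p + q = σ ∧ p - q = δ :=
      ⟨(σ + δ) / 2, (σ - δ) / 2, by omega, by omega⟩
    refine hid.2 (p, q) (p + 1, q) (by intro e; rw [Prod.mk.injEq] at e; omega) ?_
    ext c
    simp only [Kset, Set.mem_inter_iff, ball1, Set.mem_setOf_eq, dist1]
    refine and_congr_right fun hc => ?_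
    have e1 : c.1 + c.2 ≠ σ - r := fun e => hσ1 (e ▸ hSm c hc)
    have e2 : c.1 + c.2 ≠ σ + r + 1 := fun e => hσ2 (e ▸ hSm c hc)
    have e3 : c.1 - c.2 ≠ δ - r := fun e => hδ1 (e ▸ hSn c hc)
    have e4 : c.1 - c.2 ≠ δ + r + 1 := fun e => hδ2 (e ▸ hSn c hc)
    rw [abs2_le, abs2_le]
    omega
end

section
/- Let t, d be positive integers with gcd(2t, d) ≥ 3. Then for every integer r ≥ 0, the code C_{t,d} is not r-identifying in the grid graph ℤ². -/
lemma mem_Ctd_div {t d : ℤ} {c : ℤ × ℤ} (hc : c ∈ Ctd t d) :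
    ((Int.gcd (2*t) d : ℤ)) ∣ (c.1 + c.2) ∧ ((Int.gcd (2*t) d : ℤ)) ∣ (c.1 - c.2) := by
  set G : ℤ := (Int.gcd (2*t) d : ℤ) with hGdef
  obtain ⟨u, hu⟩ : G ∣ 2*t := Int.gcd_dvd_left (2*t) d
  obtain ⟨w, hw⟩ : G ∣ d := Int.gcd_dvd_right (2*t) d
  let S : AddSubgroup (ℤ × ℤ) :=
  { carrier := {p | G ∣ (p.1 + p.2) ∧ G ∣ (p.1 - p.2)}
    zero_mem' := by simp
    add_mem' := by
      rintro a b ⟨⟨x1, hx1⟩, ⟨x2, hx2⟩⟩ ⟨⟨y1, hy1⟩, ⟨y2, hy2⟩⟩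
      exact ⟨⟨x1 + y1, by simp only [Prod.fst_add, Prod.snd_add]; linarith⟩,
             ⟨x2 + y2, by simp only [Prod.fst_add, Prod.snd_add]; linarith⟩⟩
    neg_mem' := by
      rintro a ⟨⟨x1, hx1⟩, ⟨x2, hx2⟩⟩
      exact ⟨⟨-x1, by simp only [Prod.fst_neg, Prod.snd_neg]; linarith⟩,
             ⟨-x2, by simp only [Prod.fst_neg, Prod.snd_neg]; linarith⟩⟩ }
  have hle : Ctd t d ≤ S := by
    apply (AddSubgroup.closure_le S).mpr
    rintro p (rfl | rfl)
    · exact ⟨⟨u + w, by simp; linarith⟩, ⟨-w, by simp; linarith⟩⟩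
    · exact ⟨⟨-w, by simp; linarith⟩, ⟨-(u + w), by simp; linarith⟩⟩
  exact hle hc

lemma abs_split (x y r : ℤ) : |x| + |y| ≤ r ↔ |x + y| ≤ r ∧ |x - y| ≤ r := by
  rcases abs_cases x with ⟨hx, hx'⟩ | ⟨hx, hx'⟩ <;>
  rcases abs_cases y with ⟨hy, hy'⟩ | ⟨hy, hy'⟩ <;>
  rcases abs_cases (x + y) with ⟨hxy, hxy'⟩ | ⟨hxy, hxy'⟩ <;>
  rcases abs_cases (x - y) with ⟨hxy2, hxy2'⟩ | ⟨hxy2, hxy2'⟩ <;>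
  rw [hx, hy, hxy, hxy2] <;> omega

lemma shift_iff {G m r k : ℤ} (hd1 : ¬ G ∣ (m - r)) (hd2 : ¬ G ∣ (m + r + 1)) :
    |m - G * k| ≤ r ↔ |m + 1 - G * k| ≤ r := by
  rw [abs_le, abs_le]
  constructor
  · rintro ⟨h1, h2⟩
    refine ⟨by linarith, ?_⟩
    rcases lt_or_eq_of_le h2 with h | h
    · linarith
    · exact absurd ⟨k, by linarith⟩ hd1
  · rintro ⟨h1, h2⟩
    refine ⟨?_, by linarith⟩
    rcases lt_or_eq_of_le h1 with h | h
    · linarith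
    · exact absurd ⟨k, by linarith⟩ hd2

/-- Let t, d be positive integers with gcd(2t, d) ≥ 3. Then for every
integer r ≥ 0, the code C_{t,d} is not r-identifying in the grid graph ℤ². -/
theorem stmt_13 (t d : ℤ) (ht : 0 < t) (hd : 0 < d) (hg : 3 ≤ Int.gcd (2 * t) d) :
    ∀ r : ℤ, 0 ≤ r → ¬ IsIdentifying (Ctd t d) r := by
  intro r hr
  rintro ⟨hne, hinj⟩
  set G : ℤ := (Int.gcd (2*t) d : ℤ) with hGdef
  have hG3 : 3 ≤ G := by rw [hGdef]; exact_mod_cast hg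
  set m : ℤ := if G ∣ (2*r + 2) then r + 2 else r + 1 with hm
  have hd1 : ¬ G ∣ (m - r) := by
    by_cases h : G ∣ (2*r + 2)
    · rw [hm, if_pos h]
      intro hdvd
      have : (r + 2 - r) = (2 : ℤ) := by ring
      rw [this] at hdvd
      have := Int.le_of_dvd (by norm_num) hdvd
      omega
    · rw [hm, if_neg h]
      intro hdvd
      have : (r + 1 - r) = (1 : ℤ) := by ring
      rw [this] at hdvd
      have := Int.le_of_dvd (by norm_num) hdvd
      omega
  have hd2 : ¬ G ∣ (m + r + 1) := by
    by_cases h : G ∣ (2*r + 2)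
    · rw [hm, if_pos h]
      intro hdvd
      have h3 : G ∣ (r + 2 + r + 1) - (2*r + 2) := dvd_sub hdvd h
      have : (r + 2 + r + 1) - (2*r + 2) = (1 : ℤ) := by ring
      rw [this] at h3
      have := Int.le_of_dvd (by norm_num) h3
      omega
    · rw [hm, if_neg h]
      intro hdvd
      exact h (by convert hdvd using 1; ring)
  have hK : Kset (Ctd t d) r ((m, 0) : ℤ × ℤ) = Kset (Ctd t d) r ((m + 1, 0) : ℤ × ℤ) := by
    ext c
    simp only [Kset, Set.mem_inter_iff, ball1, Set.mem_setOf_eq, dist1]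
    have key : ∀ hc : c ∈ (Ctd t d : Set (ℤ × ℤ)),
        (|m - c.1| + |0 - c.2| ≤ r ↔ |m + 1 - c.1| + |0 - c.2| ≤ r) := by
      intro hc
      obtain ⟨⟨a, ha⟩, ⟨b, hb⟩⟩ := mem_Ctd_div hc
      rw [abs_split, abs_split,
        show m - c.1 + (0 - c.2) = m - G * a by rw [hGdef]; linarith,
        show m - c.1 - (0 - c.2) = m - G * b by rw [hGdef]; linarith,
        show m + 1 - c.1 + (0 - c.2) = m + 1 - G * a by rw [hGdef]; linarith,
        show m + 1 - c.1 - (0 - c.2) = m + 1 - G * b by rw [hGdef]; linarith,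
        shift_iff hd1 hd2, shift_iff hd1 hd2]
    constructor
    · rintro ⟨hc, hdist⟩
      exact ⟨hc, (key hc).mp hdist⟩
    · rintro ⟨hc, hdist⟩
      exact ⟨hc, (key hc).mpr hdist⟩
  exact hinj ((m, 0) : ℤ × ℤ) ((m + 1, 0) : ℤ × ℤ) (by simp) hK
end

section
/- Let t, d be positive integers and N = t² + (t+d)². Then the set L = {(x, y) ∈ ℤ² : 1−2t ≤ x ≤ −t and −N ≤ y ≤ −N+t−1} ∪ {(x, y) ∈ ℤ² : 1−t ≤ x ≤ d and −N ≤ y ≤ −N+t+d−1} is a complete set of coset representatives of ℤ² modulo C_{t,d}; that is, every element of ℤ² is congruent modulo C_{t,d} to exactly one element of L. -/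
lemma Ctd_mem {t d : ℤ} {p : ℤ × ℤ} (hp : p ∈ Ctd t d) :
    ∃ a b : ℤ, p.1 = a*t - b*(t+d) ∧ p.2 = a*(t+d) + b*t := by
  induction hp using AddSubgroup.closure_induction with
  | mem x hx =>
    simp only [Set.mem_insert_iff, Set.mem_singleton_iff] at hx
    rcases hx with rfl | rfl
    · exact ⟨1, 0, by norm_num, by norm_num⟩
    · exact ⟨0, 1, by norm_num, by norm_num⟩
  | zero => exact ⟨0, 0, by simp, by simp⟩
  | add x y hx hy ihx ihy =>
    obtain ⟨a1, b1, h1, h2⟩ := ihx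
    obtain ⟨a2, b2, h3, h4⟩ := ihy
    exact ⟨a1 + a2, b1 + b2, by simp [Prod.fst_add, h1, h3]; ring,
      by simp [Prod.snd_add, h2, h4]; ring⟩
  | neg x hx ihx =>
    obtain ⟨a, b, h1, h2⟩ := ihx
    exact ⟨-a, -b, by simp [h1]; ring, by simp [h2]; ring⟩

/-- membership in the L-shaped region, coordinatewise. -/
def InL (t d N lx ly : ℤ) : Prop :=
  (1 - 2*t ≤ lx ∧ lx ≤ -t ∧ -N ≤ ly ∧ ly ≤ -N + t - 1) ∨
  (1 - t ≤ lx ∧ lx ≤ d ∧ -N ≤ ly ∧ ly ≤ -N + t + d - 1)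

/-- `v` is congruent to some element of L. -/
def PP (t d N vx vy : ℤ) : Prop :=
  ∃ lx ly a b : ℤ, InL t d N lx ly ∧ vx = lx + (a*t - b*(t+d)) ∧ vy = ly + (a*(t+d) + b*t)

lemma PP_step (t d N : ℤ) (ht : 0 < t) (hd : 0 < d) (vx vy : ℤ) (h : PP t d N vx vy) :
    PP t d N (vx+1) vy ∧ PP t d N (vx-1) vy ∧ PP t d N vx (vy+1) ∧ PP t d N vx (vy-1) := by
  obtain ⟨lx, ly, a, b, hl, hx, hy⟩ := h
  refine ⟨?_, ?_, ?_, ?_⟩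
  · -- step +x
    rcases hl with ⟨h1,h2,h3,h4⟩ | ⟨h1,h2,h3,h4⟩
    · exact ⟨lx+1, ly, a, b, by unfold InL; omega, by linear_combination hx, by linear_combination hy⟩
    · by_cases hc : lx ≤ d - 1
      · exact ⟨lx+1, ly, a, b, by unfold InL; omega, by linear_combination hx, by linear_combination hy⟩
      · have hld : lx = d := by omega
        rw [hld] at hx
        by_cases hc2 : ly ≤ -N + d - 1
        · exact ⟨1-t, ly+t, a, b-1, by unfold InL; omega,
            by linear_combination hx, by linear_combination hy⟩
        · exact ⟨1-2*t, ly-d, a+1, b-1, by unfold InL; omega,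
            by linear_combination hx, by linear_combination hy⟩
  · -- step -x
    rcases hl with ⟨h1,h2,h3,h4⟩ | ⟨h1,h2,h3,h4⟩
    · by_cases hc : 1 - 2*t ≤ lx - 1
      · exact ⟨lx-1, ly, a, b, by unfold InL; omega, by linear_combination hx, by linear_combination hy⟩
      · have hld : lx = 1 - 2*t := by omega
        rw [hld] at hx
        exact ⟨d, ly+d, a-1, b+1, by unfold InL; omega,
          by linear_combination hx, by linear_combination hy⟩
    · by_cases hc : 1 - t ≤ lx - 1
      · exact ⟨lx-1, ly, a, b, by unfold InL; omega, by linear_combination hx, by linear_combination hy⟩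
      · have hld : lx = 1 - t := by omega
        rw [hld] at hx
        by_cases hc2 : ly ≤ -N + t - 1
        · exact ⟨-t, ly, a, b, by unfold InL; omega, by linear_combination hx, by linear_combination hy⟩
        · exact ⟨d, ly-t, a, b+1, by unfold InL; omega,
            by linear_combination hx, by linear_combination hy⟩
  · -- step +y
    rcases hl with ⟨h1,h2,h3,h4⟩ | ⟨h1,h2,h3,h4⟩
    · by_cases hc : ly + 1 ≤ -N + t - 1
      · exact ⟨lx, ly+1, a, b, by unfold InL; omega, by linear_combination hx, by linear_combination hy⟩
      · have hld : ly = -N + t - 1 := by omega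
        rw [hld] at hy
        exact ⟨lx+t+d, -N, a, b+1, by unfold InL; omega,
          by linear_combination hx, by linear_combination hy⟩
    · by_cases hc : ly + 1 ≤ -N + t + d - 1
      · exact ⟨lx, ly+1, a, b, by unfold InL; omega, by linear_combination hx, by linear_combination hy⟩
      · have hld : ly = -N + t + d - 1 := by omega
        rw [hld] at hy
        exact ⟨lx-t, -N, a+1, b, by unfold InL; omega,
          by linear_combination hx, by linear_combination hy⟩
  · -- step -y
    rcases hl with ⟨h1,h2,h3,h4⟩ | ⟨h1,h2,h3,h4⟩
    · by_cases hc : -N ≤ ly - 1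
      · exact ⟨lx, ly-1, a, b, by unfold InL; omega, by linear_combination hx, by linear_combination hy⟩
      · have hld : ly = -N := by omega
        rw [hld] at hy
        exact ⟨lx+t, -N+t+d-1, a-1, b, by unfold InL; omega,
          by linear_combination hx, by linear_combination hy⟩
    · by_cases hc : -N ≤ ly - 1
      · exact ⟨lx, ly-1, a, b, by unfold InL; omega, by linear_combination hx, by linear_combination hy⟩
      · have hld : ly = -N := by omega
        rw [hld] at hy
        by_cases hc2 : lx ≤ d - t
        · exact ⟨lx+t, -N+t+d-1, a-1, b, by unfold InL; omega,
            by linear_combination hx, by linear_combination hy⟩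
        · exact ⟨lx-t-d, -N+t-1, a, b-1, by unfold InL; omega,
            by linear_combination hx, by linear_combination hy⟩

lemma int_ind {P : ℤ → Prop} (b : ℤ) (h0 : P b) (hup : ∀ k, P k → P (k+1))
    (hdn : ∀ k, P k → P (k-1)) : ∀ z, P z := by
  intro z
  rcases le_total b z with h | h
  · exact Int.le_induction h0 (fun n _ hn => hup n hn) z h
  · exact Int.le_induction_down h0 (fun n _ hn => hdn n hn) z h

lemma PP_all (t d N : ℤ) (ht : 0 < t) (hd : 0 < d) : ∀ vx vy : ℤ, PP t d N vx vy := by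
  have base : PP t d N 0 (-N) :=
    ⟨0, -N, 0, 0, Or.inr (by omega), by ring, by ring⟩
  have hcol : ∀ vy, PP t d N 0 vy := by
    refine int_ind (-N) base (fun k hk => ?_) (fun k hk => ?_)
    · exact (PP_step t d N ht hd 0 k hk).2.2.1
    · exact (PP_step t d N ht hd 0 k hk).2.2.2
  intro vx vy
  refine int_ind (P := fun x => PP t d N x vy) 0 (hcol vy) (fun k hk => ?_) (fun k hk => ?_) vx
  · exact (PP_step t d N ht hd k vy hk).1
  · exact (PP_step t d N ht hd k vy hk).2.1

/-- Let t, d be positive integers and N = t² + (t+d)². Then the set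
L = {(x, y) : 1−2t ≤ x ≤ −t, −N ≤ y ≤ −N+t−1} ∪ {(x, y) : 1−t ≤ x ≤ d, −N ≤ y ≤ −N+t+d−1}
is a complete set of coset representatives of ℤ² modulo C_{t,d}: every element of ℤ² is
congruent modulo C_{t,d} to exactly one element of L. -/
theorem stmt_15 (t d : ℤ) (ht : 0 < t) (hd : 0 < d) (N : ℤ) (hN : N = t ^ 2 + (t + d) ^ 2)
    (L : Set (ℤ × ℤ))
    (hL : L = {p : ℤ × ℤ | 1 - 2 * t ≤ p.1 ∧ p.1 ≤ -t ∧ -N ≤ p.2 ∧ p.2 ≤ -N + t - 1} ∪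
              {p : ℤ × ℤ | 1 - t ≤ p.1 ∧ p.1 ≤ d ∧ -N ≤ p.2 ∧ p.2 ≤ -N + t + d - 1}) :
    ∀ v : ℤ × ℤ, ∃! l, l ∈ L ∧ v - l ∈ Ctd t d := by
  subst hL
  -- key uniqueness fact
  have uniq : ∀ l₁ l₂ : ℤ × ℤ,
      l₁ ∈ ({p : ℤ × ℤ | 1 - 2 * t ≤ p.1 ∧ p.1 ≤ -t ∧ -N ≤ p.2 ∧ p.2 ≤ -N + t - 1} ∪
        {p : ℤ × ℤ | 1 - t ≤ p.1 ∧ p.1 ≤ d ∧ -N ≤ p.2 ∧ p.2 ≤ -N + t + d - 1}) →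
      l₂ ∈ ({p : ℤ × ℤ | 1 - 2 * t ≤ p.1 ∧ p.1 ≤ -t ∧ -N ≤ p.2 ∧ p.2 ≤ -N + t - 1} ∪
        {p : ℤ × ℤ | 1 - t ≤ p.1 ∧ p.1 ≤ d ∧ -N ≤ p.2 ∧ p.2 ≤ -N + t + d - 1}) →
      l₁ - l₂ ∈ Ctd t d → l₁ = l₂ := by
    intro l₁ l₂ h₁ h₂ hC
    obtain ⟨a, b, hx, hy⟩ := Ctd_mem hC
    obtain ⟨x₁, y₁⟩ := l₁
    obtain ⟨x₂, y₂⟩ := l₂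
    simp only [Set.mem_union, Set.mem_setOf_eq] at h₁ h₂
    simp only [Prod.fst_sub, Prod.snd_sub] at hx hy
    have hN' : N = t^2 + (t+d)^2 := hN
    have hbx : x₁ - x₂ ≤ 2*t + d - 1 ∧ -(2*t + d - 1) ≤ x₁ - x₂ := by
      constructor <;> rcases h₁ with ⟨a1,a2,a3,a4⟩|⟨a1,a2,a3,a4⟩ <;>
        rcases h₂ with ⟨c1,c2,c3,c4⟩|⟨c1,c2,c3,c4⟩ <;> omega
    have hby : y₁ - y₂ ≤ t + d - 1 ∧ -(t + d - 1) ≤ y₁ - y₂ := by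
      constructor <;> rcases h₁ with ⟨a1,a2,a3,a4⟩|⟨a1,a2,a3,a4⟩ <;>
        rcases h₂ with ⟨c1,c2,c3,c4⟩|⟨c1,c2,c3,c4⟩ <;> omega
    have ha : a * (t^2 + (t+d)^2) = t * (x₁ - x₂) + (t+d) * (y₁ - y₂) := by
      rw [hx, hy]; ring
    have hb : b * (t^2 + (t+d)^2) = -(t+d) * (x₁ - x₂) + t * (y₁ - y₂) := by
      rw [hx, hy]; ring
    have hNpos : 0 < t^2 + (t+d)^2 := by positivity
    have ha1 : a ≤ 1 := by nlinarith [hbx.1, hbx.2, hby.1, hby.2, sq_nonneg (t - (t+d)), sq_nonneg d]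
    have ha2 : -1 ≤ a := by nlinarith [hbx.1, hbx.2, hby.1, hby.2, sq_nonneg (t - (t+d)), sq_nonneg d]
    have hb1 : b ≤ 1 := by nlinarith [hbx.1, hbx.2, hby.1, hby.2, sq_nonneg (t - (t+d)), sq_nonneg d]
    have hb2 : -1 ≤ b := by nlinarith [hbx.1, hbx.2, hby.1, hby.2, sq_nonneg (t - (t+d)), sq_nonneg d]
    interval_cases a <;> interval_cases b <;>
      simp only [Prod.mk.injEq] <;>
      (try constructor) <;>
      rcases h₁ with ⟨a1,a2,a3,a4⟩|⟨a1,a2,a3,a4⟩ <;>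
      rcases h₂ with ⟨c1,c2,c3,c4⟩|⟨c1,c2,c3,c4⟩ <;> omega
  intro v
  obtain ⟨lx, ly, a, b, hl, hvx, hvy⟩ := PP_all t d N ht hd v.1 v.2
  have hlmem : ((lx, ly) : ℤ × ℤ) ∈
      ({p : ℤ × ℤ | 1 - 2 * t ≤ p.1 ∧ p.1 ≤ -t ∧ -N ≤ p.2 ∧ p.2 ≤ -N + t - 1} ∪
        {p : ℤ × ℤ | 1 - t ≤ p.1 ∧ p.1 ≤ d ∧ -N ≤ p.2 ∧ p.2 ≤ -N + t + d - 1}) := by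
    rcases hl with h | h
    · exact Or.inl ⟨by omega, by omega, by omega, by omega⟩
    · exact Or.inr ⟨by omega, by omega, by omega, by omega⟩
  have hcong : v - (lx, ly) ∈ Ctd t d := by
    have : v - ((lx, ly) : ℤ × ℤ) = (a*t - b*(t+d), a*(t+d) + b*t) := by
      ext <;> simp [hvx, hvy] <;> ring
    rw [this]
    exact mem_Ctd t d a b
  refine ⟨(lx, ly), ⟨hlmem, hcong⟩, ?_⟩
  rintro l' ⟨hl'mem, hl'cong⟩
  refine uniq l' (lx, ly) hl'mem hlmem ?_
  have : l' - (lx, ly) = (v - (lx, ly)) - (v - l') := by abel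
  rw [this]
  exact AddSubgroup.sub_mem _ hcong hl'cong
end
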